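/- arXiv:1311.7352 — 13 statements merged into one kernel-verified Lean document; each statement's English description precedes it below -/
import Mathlib

section
/- If A is a bounded linear operator on a Hilbert space H and there exist positive operators P, Q in B(H) with A Q A* = A* P A, and Q is injective (equivalently has dense range), then ker A ⊆ ker A*. -/
open ContinuousLinearMap

namespace LinearMap.IsPositive

variable {𝕜 E : Type*} [RCLike 𝕜] [NormedAddCommGroup E] [InnerProductSpace 𝕜 E]
  {T : E →ₗ[𝕜] E}

abbrev preInnerProductCore (hT : T.IsPositive) : PreInnerProductSpace.Core 𝕜 E where
  inner x y := inner 𝕜 (T x) y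
  conj_inner_symm x y := by rw [inner_conj_symm, hT.isSymmetric]
  re_inner_nonneg := hT.re_inner_nonneg_left
  add_left x y z := by rw [map_add, inner_add_left]
  smul_left x y r := by rw [map_smul, inner_smul_left]

/-- Cauchy–Schwarz for the semi-inner product `⟪T ·, ·⟫`:
`‖T x‖⁴ = ‖⟪T x, T x⟫‖² ≤ re ⟪T x, x⟫ · re ⟪T (T x), T x⟫`. -/
theorem apply_eq_zero_of_inner_self_eq_zero (hT : T.IsPositive) {x : E}
    (hx : inner 𝕜 (T x) x = 0) : T x = 0 := by
  have cauchy_schwarz : ‖inner 𝕜 (T x) (T x)‖ * ‖inner 𝕜 (T (T x)) x‖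
      ≤ RCLike.re (inner 𝕜 (T x) x) * RCLike.re (inner 𝕜 (T (T x)) (T x)) :=
    InnerProductSpace.Core.inner_mul_inner_self_le (c := hT.preInnerProductCore) x (T x)
  rw [hx, map_zero, zero_mul, hT.isSymmetric (T x) x, ← sq, sq_nonpos_iff, norm_eq_zero]
    at cauchy_schwarz
  exact inner_self_eq_zero.mp cauchy_schwarz

end LinearMap.IsPositive

theorem supraposinormal_kerA_le_kerAdj_general
    {H : Type*} [NormedAddCommGroup H] [InnerProductSpace ℂ H] [CompleteSpace H]
    (A P Q : H →L[ℂ] H) (hQ : Q.IsPositive)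
    (hQinj : Function.Injective Q)
    (h : A ∘L Q ∘L adjoint A = adjoint A ∘L P ∘L A) :
    LinearMap.ker (A : H →ₗ[ℂ] H) ≤ LinearMap.ker ((adjoint A : H →L[ℂ] H) : H →ₗ[ℂ] H) := by
  intro x (hx : A x = 0)
  have hAQA : A (Q (adjoint A x)) = 0 := by simpa [hx] using congr($h x)
  have hQ_inner : inner ℂ (Q (adjoint A x)) (adjoint A x) = 0 := by
    rw [adjoint_inner_right, hAQA, inner_zero_left]
  have hQ_zero : Q (adjoint A x) = 0 := hQ.toLinearMap.apply_eq_zero_of_inner_self_eq_zero hQ_inner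
  exact hQinj (hQ_zero.trans Q.map_zero.symm)

theorem supraposinormal_kerA_le_kerAdj
    {H : Type*} [NormedAddCommGroup H] [InnerProductSpace ℂ H] [CompleteSpace H]
    (A P Q : H →L[ℂ] H) (hP : P.IsPositive) (hQ : Q.IsPositive)
    (hQinj : Function.Injective Q)
    (h : A ∘L Q ∘L adjoint A = adjoint A ∘L P ∘L A) :
    LinearMap.ker (A : H →ₗ[ℂ] H) ≤ LinearMap.ker ((adjoint A : H →L[ℂ] H) : H →ₗ[ℂ] H) :=
  supraposinormal_kerA_le_kerAdj_general A P Q hQ hQinj h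
end

section
/- If A is a bounded linear operator on a Hilbert space H and there exist positive operators P, Q in B(H) with A Q A* = A* P A, and P has dense range, then ker A* ⊆ ker A. -/
/-!
If `A† x = 0` then `⟪P A x, A x⟫ = ⟪A† P A x, x⟫ = ⟪A Q A† x, x⟫ = 0`. For a positive `P = S† S`
this forces `S A x = 0`, hence `P A x = 0`; and a symmetric operator with dense range is
injective, since its kernel is orthogonal to its range.
-/

open ContinuousLinearMap
open scoped InnerProductSpace

theorem LinearMap.IsSymmetric.injective_of_denseRange {𝕜 E : Type*} [RCLike 𝕜]
    [NormedAddCommGroup E] [InnerProductSpace 𝕜 E] {T : E →ₗ[𝕜] E} (hT : T.IsSymmetric)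
    (hdense : DenseRange T) : Function.Injective T := by
  refine (injective_iff_map_eq_zero T).2 fun y hy => hdense.eq_zero_of_inner_left 𝕜 fun z => ?_
  rw [← hT, hy, inner_zero_left]

theorem ContinuousLinearMap.IsPositive.inner_apply_self_eq_zero_iff {H : Type*}
    [NormedAddCommGroup H] [InnerProductSpace ℂ H] [CompleteSpace H] {T : H →L[ℂ] H}
    (hT : T.IsPositive) (x : H) : ⟪T x, x⟫_ℂ = 0 ↔ T x = 0 := by
  refine ⟨fun hx => ?_, fun hx => by rw [hx, inner_zero_left]⟩
  obtain ⟨S, rfl⟩ := CStarAlgebra.nonneg_iff_eq_star_mul_self.1 ((nonneg_iff_isPositive T).2 hT)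
  rw [star_eq_adjoint, mul_apply_eq_comp, adjoint_inner_left, inner_self_eq_zero] at hx
  rw [mul_apply_eq_comp, hx, map_zero]

theorem ContinuousLinearMap.IsPositive.eq_zero_of_inner_apply_self_eq_zero {H : Type*}
    [NormedAddCommGroup H] [InnerProductSpace ℂ H] [CompleteSpace H] {T : H →L[ℂ] H}
    (hT : T.IsPositive) (hdense : DenseRange T) {x : H} (hx : ⟪T x, x⟫_ℂ = 0) : x = 0 :=
  hT.isSymmetric.injective_of_denseRange hdense <| by
    rw [ContinuousLinearMap.coe_coe, (hT.inner_apply_self_eq_zero_iff x).1 hx, map_zero]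

theorem supraposinormal_kerAdj_le_kerA_general
    {H : Type*} [NormedAddCommGroup H] [InnerProductSpace ℂ H] [CompleteSpace H]
    (A P Q : H →L[ℂ] H) (hP : P.IsPositive)
    (hPdense : DenseRange P)
    (h : A ∘L Q ∘L adjoint A = adjoint A ∘L P ∘L A) :
    LinearMap.ker (adjoint A : H →ₗ[ℂ] H) ≤ LinearMap.ker (A : H →ₗ[ℂ] H) := by
  intro x hx
  have hAx : adjoint A x = 0 := hx
  refine hP.eq_zero_of_inner_apply_self_eq_zero hPdense ?_
  calc ⟪P (A x), A x⟫_ℂ = ⟪(adjoint A ∘L P ∘L A) x, x⟫_ℂ := (adjoint_inner_left A x _).symm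
    _ = ⟪(A ∘L Q ∘L adjoint A) x, x⟫_ℂ := by rw [h]
    _ = 0 := by rw [comp_apply, comp_apply, hAx, map_zero, map_zero, inner_zero_left]

theorem supraposinormal_kerAdj_le_kerA
    {H : Type*} [NormedAddCommGroup H] [InnerProductSpace ℂ H] [CompleteSpace H]
    (A P Q : H →L[ℂ] H) (hP : P.IsPositive) (hQ : Q.IsPositive)
    (hPdense : DenseRange P)
    (h : A ∘L Q ∘L adjoint A = adjoint A ∘L P ∘L A) :
    LinearMap.ker (adjoint A : H →ₗ[ℂ] H) ≤ LinearMap.ker (A : H →ₗ[ℂ] H) :=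
  supraposinormal_kerAdj_le_kerA_general A P Q hP hPdense h
end

section
/- If A is a bounded operator on Hilbert space H with A Q A* = A* P A for positive operators P, Q where Q is invertible, then A is posinormal, i.e., there exists γ ≥ 0 with γ² A*A ≥ A A* (in the ordering of self-adjoint operators). -/
/-!
A positive invertible `Q` dominates `r • 1` for some `r > 0`, its spectrum being a compact subset
of `(0, ∞)`. Conjugating by `A` gives `r • A A* ≤ A Q A* = A* P A ≤ ‖P‖ • A* A`,
so `γ = √(‖P‖ / r)` works.
-/

open ContinuousLinearMap

namespace CStarAlgebra

variable {A : Type*} [CStarAlgebra A] [PartialOrder A] [StarOrderedRing A]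

lemma exists_pos_algebraMap_le_of_isStrictlyPositive {q : A} (hq : IsStrictlyPositive q) :
    ∃ r > 0, algebraMap ℝ A r ≤ q := by
  rcases subsingleton_or_nontrivial A with _ | _
  · exact ⟨1, one_pos, (Subsingleton.elim _ _).le⟩
  · exact (CFC.exists_pos_algebraMap_le_iff hq.isSelfAdjoint).2 fun _ hx ↦ hq.spectrum_pos hx

lemma exists_mul_star_le_smul_star_mul {a p q : A} (hp : IsSelfAdjoint p)
    (hq : IsStrictlyPositive q) (h : a * q * star a = star a * p * a) :
    ∃ c : ℝ, 0 ≤ c ∧ a * star a ≤ c • (star a * a) := by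
  obtain ⟨r, hr, hrq⟩ := exists_pos_algebraMap_le_of_isStrictlyPositive hq
  refine ⟨‖p‖ / r, by positivity, ?_⟩
  have key : r • (a * star a) ≤ ‖p‖ • (star a * a) :=
    calc r • (a * star a) = a * algebraMap ℝ A r * star a := by
          simp [Algebra.algebraMap_eq_smul_one]
      _ ≤ a * q * star a := star_right_conjugate_le_conjugate hrq a
      _ = star a * p * a := h
      _ ≤ ‖p‖ • (star a * a) := star_left_conjugate_le_norm_smul
  calc a * star a = r⁻¹ • r • (a * star a) := by rw [inv_smul_smul₀ hr.ne']
    _ ≤ r⁻¹ • ‖p‖ • (star a * a) := smul_le_smul_of_nonneg_left key (by positivity)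
    _ = (‖p‖ / r) • (star a * a) := by rw [smul_smul, div_eq_inv_mul]

end CStarAlgebra

theorem supraposinormal_of_invertible_Q_posinormal
    {H : Type*} [NormedAddCommGroup H] [InnerProductSpace ℂ H] [CompleteSpace H]
    (A P Q : H →L[ℂ] H) (hP : P.IsPositive) (hQ : Q.IsPositive)
    (hQinv : ∃ Qi : H →L[ℂ] H, Q ∘L Qi = 1 ∧ Qi ∘L Q = 1)
    (h : A ∘L Q ∘L adjoint A = adjoint A ∘L P ∘L A) :
    ∃ γ : ℝ, 0 ≤ γ ∧
      (((γ : ℂ) ^ 2 • (adjoint A ∘L A)) - A ∘L adjoint A).IsPositive := by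
  obtain ⟨Qi, hQQi, hQiQ⟩ := hQinv
  have hQ_unit : IsUnit Q := ⟨⟨Q, Qi, hQQi, hQiQ⟩, rfl⟩
  have hQ_pos : IsStrictlyPositive Q :=
    hQ_unit.isStrictlyPositive ((nonneg_iff_isPositive Q).2 hQ)
  obtain ⟨c, hc, hle⟩ := CStarAlgebra.exists_mul_star_le_smul_star_mul hP.isSelfAdjoint hQ_pos
    (by simpa only [star_eq_adjoint, mul_def, comp_assoc] using h)
  refine ⟨√c, Real.sqrt_nonneg c, ?_⟩
  have hγ : (√c : ℂ) ^ 2 = c := by norm_cast; exact Real.sq_sqrt hc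
  rw [← le_def]
  simpa [hγ, star_eq_adjoint, mul_def] using hle
end

section
/- If A is a bounded operator on Hilbert space H with A P A* = A* P A for a single positive operator P with dense range, then ker A = ker A*, and moreover √P A √P is a normal operator. -/
/-!
With `P = S ∘ S` and `S` self-adjoint, `A P A†` and `A† P A` are the Gram operators of `S A†`
and `S A`, so the hypothesis says `‖S A† x‖ = ‖S A x‖` for all `x`. A self-adjoint operator with
dense range is injective, hence so is `S`, and `ker A = ker (S A) = ker (S A†) = ker A†`.
Normality of `S A S` is the hypothesis conjugated by `S`.
-/

open ContinuousLinearMap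

namespace ContinuousLinearMap

variable {𝕜 E F G : Type*} [RCLike 𝕜]
  [NormedAddCommGroup E] [InnerProductSpace 𝕜 E] [CompleteSpace E]
  [NormedAddCommGroup F] [InnerProductSpace 𝕜 F] [CompleteSpace F]
  [NormedAddCommGroup G] [InnerProductSpace 𝕜 G] [CompleteSpace G]

theorem IsSelfAdjoint.injective_of_denseRange {P : E →L[𝕜] E} (hP : IsSelfAdjoint P)
    (hdense : DenseRange P) : Function.Injective P := by
  refine (injective_iff_map_eq_zero P).mpr fun x hx => ?_
  have hd : Dense ((LinearMap.range (P : E →ₗ[𝕜] E) : Submodule 𝕜 E) : Set E) := by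
    simpa [LinearMap.coe_range, DenseRange] using hdense
  refine hd.eq_zero_of_inner_right 𝕜 ?_
  rintro _ ⟨y, rfl⟩
  rw [coe_coe, ← hP.adjoint_eq, adjoint_inner_left, hx, inner_zero_right]

theorem norm_apply_eq_of_adjoint_comp_self_eq {T : E →L[𝕜] F} {U : E →L[𝕜] G}
    (h : adjoint T ∘L T = adjoint U ∘L U) (x : E) : ‖T x‖ = ‖U x‖ := by
  have hsq : ‖T x‖ ^ 2 = ‖U x‖ ^ 2 := by
    rw [apply_norm_sq_eq_inner_adjoint_left, apply_norm_sq_eq_inner_adjoint_left, h]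
  exact (sq_eq_sq₀ (norm_nonneg _) (norm_nonneg _)).mp hsq

theorem ker_eq_of_adjoint_comp_self_eq {T : E →L[𝕜] F} {U : E →L[𝕜] G}
    (h : adjoint T ∘L T = adjoint U ∘L U) :
    LinearMap.ker (T : E →ₗ[𝕜] F) = LinearMap.ker (U : E →ₗ[𝕜] G) := by
  ext x
  rw [LinearMap.mem_ker, LinearMap.mem_ker, coe_coe, coe_coe, ← norm_eq_zero,
    norm_apply_eq_of_adjoint_comp_self_eq h, norm_eq_zero]

theorem IsSelfAdjoint.adjoint_comp_self_comp {S : F →L[𝕜] F} (hS : IsSelfAdjoint S)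
    (A : E →L[𝕜] F) :
    adjoint (S ∘L A) ∘L (S ∘L A) = adjoint A ∘L (S ∘L S) ∘L A := by
  simp only [adjoint_comp, hS.adjoint_eq, comp_assoc]

theorem IsSelfAdjoint.conj_comp_adjoint_comm {S : E →L[𝕜] E} (hS : IsSelfAdjoint S)
    {A : E →L[𝕜] E} (h : A ∘L (S ∘L S) ∘L adjoint A = adjoint A ∘L (S ∘L S) ∘L A) :
    (S ∘L A ∘L S) ∘L adjoint (S ∘L A ∘L S) = adjoint (S ∘L A ∘L S) ∘L (S ∘L A ∘L S) := by
  have hadj : adjoint (S ∘L A ∘L S) = S ∘L adjoint A ∘L S := by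
    simp only [adjoint_comp, hS.adjoint_eq, comp_assoc]
  calc (S ∘L A ∘L S) ∘L adjoint (S ∘L A ∘L S)
      = S ∘L (A ∘L (S ∘L S) ∘L adjoint A) ∘L S := by simp only [hadj, comp_assoc]
    _ = S ∘L (adjoint A ∘L (S ∘L S) ∘L A) ∘L S := by rw [h]
    _ = adjoint (S ∘L A ∘L S) ∘L (S ∘L A ∘L S) := by simp only [hadj, comp_assoc]

end ContinuousLinearMap

theorem supraposinormal_equal_interrupters_general
    {H : Type*} [NormedAddCommGroup H] [InnerProductSpace ℂ H] [CompleteSpace H]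
    (A P S : H →L[ℂ] H) (hPdense : DenseRange P)
    (hS : S.IsPositive) (hS2 : S ∘L S = P)
    (h : A ∘L P ∘L adjoint A = adjoint A ∘L P ∘L A) :
    LinearMap.ker (A : H →ₗ[ℂ] H) = LinearMap.ker ((adjoint A : H →L[ℂ] H) : H →ₗ[ℂ] H) ∧
      (S ∘L A ∘L S) ∘L adjoint (S ∘L A ∘L S)
        = adjoint (S ∘L A ∘L S) ∘L (S ∘L A ∘L S) := by
  subst hS2
  have hSsa : IsSelfAdjoint S := hS.isSelfAdjoint
  have hSker : LinearMap.ker (S : H →ₗ[ℂ] H) = ⊥ :=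
    LinearMap.ker_eq_bot.mpr <| Function.Injective.of_comp
      ((hSsa.star_eq ▸ IsSelfAdjoint.star_mul_self S).injective_of_denseRange hPdense)
  refine ⟨?_, hSsa.conj_comp_adjoint_comm h⟩
  have hgram :
      adjoint (S ∘L A) ∘L (S ∘L A) = adjoint (S ∘L adjoint A) ∘L (S ∘L adjoint A) := by
    rw [hSsa.adjoint_comp_self_comp, hSsa.adjoint_comp_self_comp, adjoint_adjoint, h]
  calc LinearMap.ker (A : H →ₗ[ℂ] H)
      = LinearMap.ker ((S ∘L A : H →L[ℂ] H) : H →ₗ[ℂ] H) :=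
        (LinearMap.ker_comp_of_ker_eq_bot _ hSker).symm
    _ = LinearMap.ker ((S ∘L adjoint A : H →L[ℂ] H) : H →ₗ[ℂ] H) :=
      ker_eq_of_adjoint_comp_self_eq hgram
    _ = _ := LinearMap.ker_comp_of_ker_eq_bot _ hSker

/-- If A P A* = A* P A for a single positive operator P with dense range, then
ker A = ker A*, and √P A √P is normal (S denotes the positive square root of P). -/
theorem supraposinormal_equal_interrupters
    {H : Type*} [NormedAddCommGroup H] [InnerProductSpace ℂ H] [CompleteSpace H]
    (A P S : H →L[ℂ] H) (hP : P.IsPositive) (hPdense : DenseRange P)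
    (hS : S.IsPositive) (hS2 : S ∘L S = P)
    (h : A ∘L P ∘L adjoint A = adjoint A ∘L P ∘L A) :
    LinearMap.ker (A : H →ₗ[ℂ] H) = LinearMap.ker ((adjoint A : H →L[ℂ] H) : H →ₗ[ℂ] H) ∧
      (S ∘L A ∘L S) ∘L adjoint (S ∘L A ∘L S)
        = adjoint (S ∘L A ∘L S) ∘L (S ∘L A ∘L S) :=
  supraposinormal_equal_interrupters_general A P S hPdense hS hS2 h
end

section
/- Suppose A ∈ B(H) and (Q,P) is a pair of positive operators such that (A − λ) Q (A − λ)* = (A − λ)* P (A − λ) for three distinct real values λ = 0, r₁, r₂. Then Q = P. -/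
/-!
For fixed `a`, `b`, `p`, `q` in an algebra, `(a - λ) q (b - λ) - (b - λ) p (a - λ)` is a quadratic
polynomial in `λ` with leading coefficient `q - p`. With `b = A*`, the hypothesis says it vanishes
at the three points `0, r₁, r₂`, so its leading coefficient is zero.
-/

open ContinuousLinearMap

theorem eq_zero_of_smul_add_sq_smul_eq_zero {𝕜 V : Type*} [Field 𝕜] [AddCommGroup V] [Module 𝕜 V]
    {v w : V} {r₁ r₂ : 𝕜} (hr₁ : r₁ ≠ 0) (hr₂ : r₂ ≠ 0) (hr : r₁ ≠ r₂)
    (h₁ : r₁ • v + r₁ ^ 2 • w = 0) (h₂ : r₂ • v + r₂ ^ 2 • w = 0) : w = 0 := by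
  have hv₁ : v + r₁ • w = 0 := by
    rw [pow_two, mul_smul, ← smul_add, smul_eq_zero] at h₁
    exact h₁.resolve_left hr₁
  have hv₂ : v + r₂ • w = 0 := by
    rw [pow_two, mul_smul, ← smul_add, smul_eq_zero] at h₂
    exact h₂.resolve_left hr₂
  have : (r₁ - r₂) • w = 0 := by rw [sub_smul]; linear_combination (norm := module) hv₁ - hv₂
  exact (smul_eq_zero.mp this).resolve_left (sub_ne_zero.mpr hr)

theorem sub_smul_one_mul_mul_sub_smul_one {𝕜 R : Type*} [CommRing 𝕜] [Ring R] [Algebra 𝕜 R]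
    (a q b : R) (t : 𝕜) :
    (a - t • 1) * q * (b - t • 1) = a * q * b - t • (a * q + q * b) + t ^ 2 • q := by
  simp only [sub_mul, mul_sub, smul_mul_assoc, mul_smul_comm, one_mul, mul_one]
  module

theorem eq_of_translate_sandwiches_eq {𝕜 R : Type*} [Field 𝕜] [Ring R] [Algebra 𝕜 R]
    {a b p q : R} {r₁ r₂ : 𝕜} (hr₁ : r₁ ≠ 0) (hr₂ : r₂ ≠ 0) (hr : r₁ ≠ r₂)
    (h : ∀ t ∈ ({0, r₁, r₂} : Set 𝕜),
      (a - t • 1) * q * (b - t • 1) = (b - t • 1) * p * (a - t • 1)) :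
    q = p := by
  have hquad : ∀ t ∈ ({r₁, r₂} : Set 𝕜),
      t • (p * a + b * p - a * q - q * b) + t ^ 2 • (q - p) = 0 := by
    intro t ht
    have h₀ := h 0 (by simp)
    have ht := h t (by simp_all)
    simp only [zero_smul, sub_zero] at h₀
    rw [sub_smul_one_mul_mul_sub_smul_one, sub_smul_one_mul_mul_sub_smul_one] at ht
    linear_combination (norm := module) ht - h₀
  exact sub_eq_zero.mp
    (eq_zero_of_smul_add_sq_smul_eq_zero hr₁ hr₂ hr (hquad r₁ (by simp)) (hquad r₂ (by simp)))

theorem adjoint_sub_ofReal_smul_one {H : Type*} [NormedAddCommGroup H] [InnerProductSpace ℂ H]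
    [CompleteSpace H] (A : H →L[ℂ] H) (r : ℝ) :
    adjoint (A - (r : ℂ) • 1) = adjoint A - (r : ℂ) • 1 := by
  simp [← star_eq_adjoint, star_smul]

theorem interrupter_pair_eq_of_three_translates_general
    {H : Type*} [NormedAddCommGroup H] [InnerProductSpace ℂ H] [CompleteSpace H]
    (A P Q : H →L[ℂ] H)
    (r₁ r₂ : ℝ) (hr₁ : r₁ ≠ 0) (hr₂ : r₂ ≠ 0) (hr : r₁ ≠ r₂)
    (h : ∀ lam : ℝ, lam = 0 ∨ lam = r₁ ∨ lam = r₂ →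
      (A - (lam : ℂ) • 1) ∘L Q ∘L adjoint (A - (lam : ℂ) • 1)
        = adjoint (A - (lam : ℂ) • 1) ∘L P ∘L (A - (lam : ℂ) • 1)) :
    Q = P := by
  refine eq_of_translate_sandwiches_eq (𝕜 := ℂ) (a := A) (b := adjoint A)
    (Complex.ofReal_ne_zero.mpr hr₁) (Complex.ofReal_ne_zero.mpr hr₂)
    (Complex.ofReal_injective.ne hr) ?_
  have hmul : ∀ lam : ℝ, lam = 0 ∨ lam = r₁ ∨ lam = r₂ →
      (A - (lam : ℂ) • 1) * Q * (adjoint A - (lam : ℂ) • 1)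
        = (adjoint A - (lam : ℂ) • 1) * P * (A - (lam : ℂ) • 1) := fun lam hlam => by
    rw [← adjoint_sub_ofReal_smul_one, mul_assoc, mul_assoc]
    exact h lam hlam
  rintro t (rfl | rfl | rfl)
  · simpa using hmul 0 (Or.inl rfl)
  · exact hmul r₁ (Or.inr (Or.inl rfl))
  · exact hmul r₂ (Or.inr (Or.inr rfl))

/-- If (A − λ) Q (A − λ)* = (A − λ)* P (A − λ) for λ = 0, r₁, r₂ distinct reals,
then Q = P. -/
theorem interrupter_pair_eq_of_three_translates
    {H : Type*} [NormedAddCommGroup H] [InnerProductSpace ℂ H] [CompleteSpace H]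
    (A P Q : H →L[ℂ] H) (hP : P.IsPositive) (hQ : Q.IsPositive)
    (r₁ r₂ : ℝ) (hr₁ : r₁ ≠ 0) (hr₂ : r₂ ≠ 0) (hr : r₁ ≠ r₂)
    (h : ∀ lam : ℝ, lam = 0 ∨ lam = r₁ ∨ lam = r₂ →
      (A - (lam : ℂ) • 1) ∘L Q ∘L adjoint (A - (lam : ℂ) • 1)
        = adjoint (A - (lam : ℂ) • 1) ∘L P ∘L (A - (lam : ℂ) • 1)) :
    Q = P :=
  interrupter_pair_eq_of_three_translates_general A P Q r₁ r₂ hr₁ hr₂ hr h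
end

section
/- Let A be supraposinormal on H with A Q A* = A* P A where Q, P are positive operators and at least one of them has dense range. If D is a positive operator and there exist constants δ₁, δ₂ > 0 with δ₁Q ≥ D ≥ δ₂P ≥ 0, then the operator √D A √D is posinormal, i.e., (δ₁/δ₂)(√D A* √D)(√D A √D) ≥ (√D A √D)(√D A* √D). -/
/-!
Write `T = S A S` with `S = √D`. Then `c T*T - T T* = S (c A* D A - A D A*) S`, and since
`A Q A* = A* P A`, for `c δ₂ = δ₁` the middle operator splits as
`c A* (D - δ₂ P) A + A (δ₁ Q - D) A*`, a sum of congruences of positive operators.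
-/

open ContinuousLinearMap
open scoped ComplexOrder

namespace ContinuousLinearMap

theorem conj_comp_conj {R M : Type*} [Semiring R] [TopologicalSpace M] [AddCommMonoid M]
    [Module R M] (S A B : M →L[R] M) :
    (S ∘L A ∘L S) ∘L (S ∘L B ∘L S) = S ∘L (A ∘L (S ∘L S) ∘L B) ∘L S :=
  rfl

variable {𝕜 E : Type*} [RCLike 𝕜] [NormedAddCommGroup E] [InnerProductSpace 𝕜 E] [CompleteSpace E]

theorem smul_adjoint_conj_sub_conj_adjoint_eq {A P Q : E →L[𝕜] E}
    (h : A ∘L Q ∘L adjoint A = adjoint A ∘L P ∘L A) (D : E →L[𝕜] E) (c δ : 𝕜) :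
    c • (adjoint A ∘L D ∘L A) - A ∘L D ∘L adjoint A
      = c • (adjoint A ∘L (D - δ • P) ∘L A) + A ∘L ((c * δ) • Q - D) ∘L adjoint A := by
  simp only [comp_sub, sub_comp, comp_smul, smul_comp, h, mul_smul, smul_sub]
  abel

theorem isPositive_smul_adjoint_conj_sub_conj_adjoint {A P Q D : E →L[𝕜] E}
    (h : A ∘L Q ∘L adjoint A = adjoint A ∘L P ∘L A) {c δ : 𝕜} (hc : 0 ≤ c)
    (hQD : ((c * δ) • Q - D).IsPositive) (hDP : (D - δ • P).IsPositive) :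
    (c • (adjoint A ∘L D ∘L A) - A ∘L D ∘L adjoint A).IsPositive := by
  rw [smul_adjoint_conj_sub_conj_adjoint_eq h D c δ]
  exact ((hDP.adjoint_conj A).smul_of_nonneg hc).add (hQD.conj_adjoint A)

end ContinuousLinearMap

theorem sqrtD_A_sqrtD_posinormal_general
    {H : Type*} [NormedAddCommGroup H] [InnerProductSpace ℂ H] [CompleteSpace H]
    (A P Q D S : H →L[ℂ] H)
    (h : A ∘L Q ∘L adjoint A = adjoint A ∘L P ∘L A)
    (hS : S.IsPositive) (hS2 : S ∘L S = D)
    (δ₁ δ₂ : ℝ) (hδ₁ : 0 < δ₁) (hδ₂ : 0 < δ₂)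
    (h1 : ((δ₁ : ℂ) • Q - D).IsPositive)
    (h2 : (D - (δ₂ : ℂ) • P).IsPositive) :
    (((δ₁ / δ₂ : ℝ) : ℂ) • ((S ∘L adjoint A ∘L S) ∘L (S ∘L A ∘L S))
      - (S ∘L A ∘L S) ∘L (S ∘L adjoint A ∘L S)).IsPositive := by
  have hc : (0 : ℂ) ≤ ((δ₁ / δ₂ : ℝ) : ℂ) := by exact_mod_cast (div_pos hδ₁ hδ₂).le
  have hcδ : ((δ₁ / δ₂ : ℝ) : ℂ) * δ₂ = δ₁ := by
    have : (δ₂ : ℂ) ≠ 0 := by exact_mod_cast hδ₂.ne'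
    push_cast
    field_simp
  have hmid := isPositive_smul_adjoint_conj_sub_conj_adjoint h hc (hcδ ▸ h1) h2
  have key := hmid.conj_adjoint S
  rw [hS.isSelfAdjoint.adjoint_eq, sub_comp, comp_sub, smul_comp, comp_smul] at key
  rwa [conj_comp_conj, conj_comp_conj, hS2]

/-- If A Q A* = A* P A with Q or P of dense range, D positive, and
δ₁Q ≥ D ≥ δ₂P ≥ 0 with δ₁, δ₂ > 0, then (with S = √D) the operator S A S
is posinormal: (δ₁/δ₂)(S A* S)(S A S) ≥ (S A S)(S A* S). -/
theorem sqrtD_A_sqrtD_posinormal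
    {H : Type*} [NormedAddCommGroup H] [InnerProductSpace ℂ H] [CompleteSpace H]
    (A P Q D S : H →L[ℂ] H) (hP : P.IsPositive) (hQ : Q.IsPositive)
    (hdense : DenseRange Q ∨ DenseRange P)
    (h : A ∘L Q ∘L adjoint A = adjoint A ∘L P ∘L A)
    (hD : D.IsPositive) (hS : S.IsPositive) (hS2 : S ∘L S = D)
    (δ₁ δ₂ : ℝ) (hδ₁ : 0 < δ₁) (hδ₂ : 0 < δ₂)
    (h1 : ((δ₁ : ℂ) • Q - D).IsPositive)
    (h2 : (D - (δ₂ : ℂ) • P).IsPositive) :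
    (((δ₁ / δ₂ : ℝ) : ℂ) • ((S ∘L adjoint A ∘L S) ∘L (S ∘L A ∘L S))
      - (S ∘L A ∘L S) ∘L (S ∘L adjoint A ∘L S)).IsPositive :=
  sqrtD_A_sqrtD_posinormal_general A P Q D S h hS hS2 δ₁ δ₂ hδ₁ hδ₂ h1 h2
end

section
/- Let A be a bounded operator with A Q A* = A* P A for positive operators Q, P, and suppose there exist constants 0 < δ₁ ≤ δ₂ with δ₁Q ≥ I ≥ δ₂P ≥ 0. Then A is hyponormal, i.e., A*A ≥ AA*. -/
open ContinuousLinearMap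
open scoped ComplexOrder

namespace ContinuousLinearMap

variable {𝕜 E F : Type*} [RCLike 𝕜] [NormedAddCommGroup E] [InnerProductSpace 𝕜 E]
  [NormedAddCommGroup F] [InnerProductSpace 𝕜 F]

theorem IsPositive.ofReal_smul_le_ofReal_smul {T : E →L[𝕜] E} (hT : T.IsPositive) {a b : ℝ}
    (hab : a ≤ b) : (a : 𝕜) • T ≤ (b : 𝕜) • T := by
  rw [le_def, ← sub_smul, ← RCLike.ofReal_sub]
  exact hT.smul_of_nonneg (RCLike.ofReal_nonneg.mpr (sub_nonneg.mpr hab))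

variable [CompleteSpace E] [CompleteSpace F]

theorem conj_adjoint_le_conj_adjoint {T U : E →L[𝕜] E} (hTU : T ≤ U) (S : E →L[𝕜] F) :
    S ∘L T ∘L adjoint S ≤ S ∘L U ∘L adjoint S := by
  rw [le_def] at hTU ⊢
  simpa only [sub_comp, comp_sub] using hTU.conj_adjoint S

theorem adjoint_conj_le_adjoint_conj {T U : E →L[𝕜] E} (hTU : T ≤ U) (S : F →L[𝕜] E) :
    adjoint S ∘L T ∘L S ≤ adjoint S ∘L U ∘L S := by
  simpa only [adjoint_adjoint] using conj_adjoint_le_conj_adjoint hTU (adjoint S)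

end ContinuousLinearMap

theorem hyponormal_of_interrupter_pair_general
    {H : Type*} [NormedAddCommGroup H] [InnerProductSpace ℂ H] [CompleteSpace H]
    (A P Q : H →L[ℂ] H) (hP : P.IsPositive)
    (h : A ∘L Q ∘L adjoint A = adjoint A ∘L P ∘L A)
    (δ₁ δ₂ : ℝ) (hδ : δ₁ ≤ δ₂)
    (h1 : ((δ₁ : ℂ) • Q - 1).IsPositive)
    (h2 : ((1 : H →L[ℂ] H) - (δ₂ : ℂ) • P).IsPositive) :
    (adjoint A ∘L A - A ∘L adjoint A).IsPositive := by
  change A ∘L adjoint A ≤ adjoint A ∘L A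
  calc A ∘L adjoint A = A ∘L 1 ∘L adjoint A := rfl
    _ ≤ A ∘L ((δ₁ : ℂ) • Q) ∘L adjoint A := conj_adjoint_le_conj_adjoint h1 A
    _ = (δ₁ : ℂ) • (adjoint A ∘L P ∘L A) := by rw [← h, smul_comp, comp_smul]
    _ ≤ (δ₂ : ℂ) • (adjoint A ∘L P ∘L A) :=
      (hP.adjoint_conj A).ofReal_smul_le_ofReal_smul hδ
    _ = adjoint A ∘L ((δ₂ : ℂ) • P) ∘L A := by rw [smul_comp, comp_smul]
    _ ≤ adjoint A ∘L 1 ∘L A := adjoint_conj_le_adjoint_conj h2 A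
    _ = adjoint A ∘L A := rfl

/-- If A Q A* = A* P A and δ₁Q ≥ I ≥ δ₂P ≥ 0 with 0 < δ₁ ≤ δ₂, then A is
hyponormal: A*A ≥ AA*. -/
theorem hyponormal_of_interrupter_pair
    {H : Type*} [NormedAddCommGroup H] [InnerProductSpace ℂ H] [CompleteSpace H]
    (A P Q : H →L[ℂ] H) (hP : P.IsPositive) (hQ : Q.IsPositive)
    (h : A ∘L Q ∘L adjoint A = adjoint A ∘L P ∘L A)
    (δ₁ δ₂ : ℝ) (hδ₁ : 0 < δ₁) (hδ : δ₁ ≤ δ₂)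
    (h1 : ((δ₁ : ℂ) • Q - 1).IsPositive)
    (h2 : ((1 : H →L[ℂ] H) - (δ₂ : ℂ) • P).IsPositive) :
    (adjoint A ∘L A - A ∘L adjoint A).IsPositive :=
  hyponormal_of_interrupter_pair_general A P Q hP h δ₁ δ₂ hδ h1 h2
end

section
/- For k ≥ 1 the generalized Cesàro operator C_k on ℓ² is hyponormal: C_k* C_k − C_k C_k* is a positive operator. -/
/-!
For finitely supported `f` put `c i = f i / (k + i)` and `S n = ∑ i < n, (k + i) c i`, so that
`(C_k f) i = S (i + 1) / (k + i)` and `(C_k* f) j = ∑ i ≥ j, c i`. Induction on `n` gives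
`∑ j < n, ‖∑ j ≤ i < n, c i‖² + (k - 1) ‖∑ i < n, c i‖²
  = ∑ i < n, (1 / (k + i) - 1 / (k + i + 1)) ‖S (i + 1)‖² + ‖S n‖² / (k + n)`.
For `k ≥ 1` the second term on the left is nonnegative, and `1 / (k + i) - 1 / (k + i + 1)` is at
most `1 / (k + i) ^ 2`; letting `n → ∞` kills the boundary term and yields `‖C_k* f‖ ≤ ‖C_k f‖`.
Finitely supported sequences are dense in `ℓ²`, and this norm inequality is hyponormality.
-/

open ContinuousLinearMap Finset Filter Topology
open scoped InnerProductSpace ENNReal ComplexConjugate lp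

theorem ContinuousLinearMap.isPositive_adjoint_comp_self_sub_self_comp_adjoint
    {𝕜 H : Type*} [RCLike 𝕜] [NormedAddCommGroup H] [InnerProductSpace 𝕜 H] [CompleteSpace H]
    {T : H →L[𝕜] H} (hT : ∀ x, ‖adjoint T x‖ ≤ ‖T x‖) :
    (adjoint T ∘L T - T ∘L adjoint T).IsPositive := by
  refine isPositive_def'.mpr ⟨(IsSelfAdjoint.star_mul_self T).sub (IsSelfAdjoint.mul_star_self T),
    fun x => ?_⟩
  rw [reApplyInnerSelf_apply, sub_apply, comp_apply, comp_apply, inner_sub_left, map_sub,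
    adjoint_inner_left, ← adjoint_inner_right T (adjoint T x) x, inner_self_eq_norm_sq,
    inner_self_eq_norm_sq, sub_nonneg]
  exact pow_le_pow_left₀ (norm_nonneg _) (hT x) 2

namespace lp

theorem hasSum_norm_sq {ι : Type*} {E : ι → Type*} [∀ i, NormedAddCommGroup (E i)]
    (f : lp E 2) : HasSum (fun i => ‖f i‖ ^ 2) (‖f‖ ^ 2) := by
  simpa using lp.hasSum_norm (p := 2) (by norm_num) f

theorem dense_setOf_eventually_cofinite_eq_zero {ι : Type*} {E : ι → Type*}
    [∀ i, NormedAddCommGroup (E i)] {p : ℝ≥0∞} [Fact (1 ≤ p)] (hp : p ≠ ∞) :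
    Dense {f : lp E p | ∀ᶠ i in cofinite, f i = 0} := by
  classical
  refine fun f => mem_closure_of_tendsto (lp.hasSum_single hp f) <| .of_forall fun s =>
    eventually_cofinite.mpr <| s.finite_toSet.subset fun i hi => ?_
  by_contra his
  refine hi ?_
  rw [lp.coeFn_sum, Finset.sum_apply]
  exact sum_eq_zero fun j hj => lp.single_apply_ne p j _ fun hij => his (hij ▸ hj)

theorem adjoint_apply {ι 𝕜 : Type*} [RCLike 𝕜] [DecidableEq ι]
    (A : ℓ²(ι, 𝕜) →L[𝕜] ℓ²(ι, 𝕜)) (g : ℓ²(ι, 𝕜)) (j : ι) :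
    adjoint A g j = ∑' i, g i * conj (A (lp.single 2 j 1) i) := by
  have h := lp.inner_single_left (𝕜 := 𝕜) j (1 : 𝕜) (adjoint A g)
  rw [adjoint_inner_right, lp.inner_eq_tsum] at h
  simpa using h.symm

end lp

theorem Finset.sum_range_sum_Ico {M : Type*} [AddCommMonoid M] (c : ℕ → M) (n : ℕ) :
    ∑ j ∈ range n, ∑ i ∈ Ico j n, c i = ∑ i ∈ range n, (i + 1) • c i := by
  rw [range_eq_Ico, sum_Ico_Ico_comm]
  simp

section TailSums

variable {E : Type*} [NormedAddCommGroup E] [InnerProductSpace ℝ E]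

theorem sum_range_sum_Ico_add_smul (k : ℝ) (c : ℕ → E) (n : ℕ) :
    ∑ j ∈ range n, ∑ i ∈ Ico j n, c i + (k - 1) • ∑ i ∈ range n, c i =
      ∑ i ∈ range n, (k + i) • c i := by
  rw [sum_range_sum_Ico, smul_sum, ← sum_add_distrib]
  refine sum_congr rfl fun i _ => ?_
  rw [← Nat.cast_smul_eq_nsmul ℝ, ← add_smul]
  push_cast
  ring_nf

theorem sum_norm_sq_sum_Ico_add (k : ℝ) (hk : ∀ i : ℕ, k + i ≠ 0) (c : ℕ → E) (n : ℕ) :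
    ∑ j ∈ range n, ‖∑ i ∈ Ico j n, c i‖ ^ 2 + (k - 1) * ‖∑ i ∈ range n, c i‖ ^ 2 =
      ∑ i ∈ range n, (1 / (k + i) - 1 / (k + i + 1)) * ‖∑ j ∈ range (i + 1), (k + j) • c j‖ ^ 2
        + ‖∑ j ∈ range n, (k + j) • c j‖ ^ 2 / (k + n) := by
  induction n with
  | zero => simp
  | succ n ih =>
    -- Both sides grow by `2 ⟪S, c n⟫ + (k + n) ‖c n‖²`, where `S = ∑ j < n, (k + j) • c j`.
    have hT : ∑ j ∈ range (n + 1), ‖∑ i ∈ Ico j (n + 1), c i‖ ^ 2 =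
        ∑ j ∈ range n, ‖∑ i ∈ Ico j n, c i‖ ^ 2
          + 2 * ⟪∑ j ∈ range n, ∑ i ∈ Ico j n, c i, c n⟫_ℝ + (n + 1) * ‖c n‖ ^ 2 := by
      rw [sum_congr rfl fun j hj => by
        rw [sum_Ico_succ_top (Nat.lt_succ_iff.mp (mem_range.mp hj)) c]]
      simp only [norm_add_sq_real, sum_add_distrib, ← mul_sum, ← sum_inner]
      simp [sum_range_succ]
    have hR : ‖∑ i ∈ range (n + 1), c i‖ ^ 2 =
        ‖∑ i ∈ range n, c i‖ ^ 2 + 2 * ⟪∑ i ∈ range n, c i, c n⟫_ℝ + ‖c n‖ ^ 2 := by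
      rw [sum_range_succ, norm_add_sq_real]
    have hparts := congrArg (⟪·, c n⟫_ℝ) (sum_range_sum_Ico_add_smul k c n)
    simp only [inner_add_left, inner_smul_left, conj_trivial] at hparts
    rw [hT, hR]
    simp only [sum_range_succ _ n, Nat.cast_succ, ← add_assoc]
    set S := ∑ j ∈ range n, (k + j) • c j
    have h₀ : k + n ≠ 0 := hk n
    have h₁ : k + n + 1 ≠ 0 := by simpa [add_assoc] using hk (n + 1)
    have hS : ‖S + (k + n) • c n‖ ^ 2 / (k + n) =
        ‖S‖ ^ 2 / (k + n) + 2 * ⟪S, c n⟫_ℝ + (k + n) * ‖c n‖ ^ 2 := by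
      rw [norm_add_sq_real, inner_smul_right, norm_smul, mul_pow, Real.norm_eq_abs, sq_abs]
      field_simp
    have htele : ∀ x : ℝ, (1 / (k + n) - 1 / (k + n + 1)) * x + x / (k + n + 1) =
        x / (k + n) := fun x => by
      field_simp
      ring
    linear_combination ih + 2 * hparts + htele (‖S + (k + n) • c n‖ ^ 2) - hS

theorem sum_norm_sq_sum_Ico_le (k : ℝ) (hk : 1 ≤ k) (f : ℕ → E) (n : ℕ) :
    ∑ j ∈ range n, ‖∑ i ∈ Ico j n, (k + i)⁻¹ • f i‖ ^ 2 ≤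
      ∑ i ∈ range n, ‖∑ j ∈ range (i + 1), f j‖ ^ 2 / (k + i) ^ 2
        + ‖∑ j ∈ range n, f j‖ ^ 2 / (k + n) := by
  have hpos : ∀ i : ℕ, 0 < k + i := fun i => by positivity
  have hid := sum_norm_sq_sum_Ico_add k (fun i => (hpos i).ne') (fun i => (k + i)⁻¹ • f i) n
  simp only [smul_inv_smul₀ (hpos _).ne'] at hid
  have hgap : ∀ i : ℕ, 1 / (k + i) - 1 / (k + i + 1) ≤ ((k + i) ^ 2)⁻¹ := fun i => by
    rw [div_sub_div _ _ (hpos i).ne' (by linarith [hpos i]), ← one_div,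
      div_le_div_iff₀ (by nlinarith [hpos i]) (by nlinarith [hpos i])]
    nlinarith [hpos i]
  calc _ ≤ ∑ j ∈ range n, ‖∑ i ∈ Ico j n, (k + i)⁻¹ • f i‖ ^ 2
        + (k - 1) * ‖∑ i ∈ range n, (k + i)⁻¹ • f i‖ ^ 2 :=
        le_add_of_nonneg_right (mul_nonneg (sub_nonneg.mpr hk) (sq_nonneg _))
    _ = _ := hid
    _ ≤ _ := by
      gcongr with i
      exact (mul_le_mul_of_nonneg_right (hgap i) (sq_nonneg _)).trans_eq (inv_mul_eq_div _ _)

end TailSums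

def IsCesaroOperator (k : ℝ) (C : ℓ²(ℕ, ℂ) →L[ℂ] ℓ²(ℕ, ℂ)) : Prop :=
  ∀ f : ℓ²(ℕ, ℂ), ∀ i : ℕ, C f i = (∑ j ∈ range (i + 1), f j) / ((k : ℂ) + (i : ℂ))

namespace IsCesaroOperator

variable {k : ℝ} {C : ℓ²(ℕ, ℂ) →L[ℂ] ℓ²(ℕ, ℂ)}

theorem adjoint_apply (hC : IsCesaroOperator k C) (g : ℓ²(ℕ, ℂ)) (n : ℕ)
    (hg : ∀ i, n ≤ i → g i = 0) (j : ℕ) :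
    adjoint C g j = ∑ i ∈ Ico j n, (k + i)⁻¹ • g i := by
  rw [lp.adjoint_apply, tsum_eq_sum (s := range n) fun i hi => by
    rw [hg i (by simpa using hi), zero_mul]]
  simp only [hC _ _, lp.single_apply, Finset.sum_pi_single', mem_range, Nat.lt_succ_iff]
  have hIco : Ico j n = {i ∈ range n | j ≤ i} := by
    ext
    simp only [mem_Ico, mem_filter, mem_range]
    omega
  rw [hIco, sum_filter]
  refine sum_congr rfl fun i _ => ?_
  split_ifs <;> simp [Complex.real_smul, div_eq_inv_mul, mul_comm]

theorem norm_sq_adjoint_le (hC : IsCesaroOperator k C) (hk : 1 ≤ k) (g : ℓ²(ℕ, ℂ)) (n : ℕ)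
    (hg : ∀ i, n ≤ i → g i = 0) :
    ‖adjoint C g‖ ^ 2 ≤ ‖C g‖ ^ 2 + ‖∑ j ∈ range n, g j‖ ^ 2 / (k + n) := by
  have hCg : ∀ i : ℕ, ‖C g i‖ ^ 2 = ‖∑ j ∈ range (i + 1), g j‖ ^ 2 / (k + i) ^ 2 := fun i => by
    rw [hC, norm_div, div_pow, show (k : ℂ) + i = ((k + i : ℝ) : ℂ) by push_cast; rfl,
      Complex.norm_real, Real.norm_eq_abs, sq_abs]
  have hAg : ‖adjoint C g‖ ^ 2 = ∑ j ∈ range n, ‖∑ i ∈ Ico j n, (k + i)⁻¹ • g i‖ ^ 2 := by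
    refine (lp.hasSum_norm_sq _).unique ?_
    simp only [hC.adjoint_apply g n hg]
    exact hasSum_sum_of_ne_finset_zero fun j hj => by
      rw [Ico_eq_empty (by simpa using hj), sum_empty, norm_zero, zero_pow two_ne_zero]
  calc ‖adjoint C g‖ ^ 2
      ≤ ∑ i ∈ range n, ‖∑ j ∈ range (i + 1), g j‖ ^ 2 / (k + i) ^ 2
        + ‖∑ j ∈ range n, g j‖ ^ 2 / (k + n) := hAg ▸ sum_norm_sq_sum_Ico_le k hk (g ·) n
    _ ≤ ‖C g‖ ^ 2 + ‖∑ j ∈ range n, g j‖ ^ 2 / (k + n) := by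
      simp only [← hCg]
      gcongr
      exact sum_le_hasSum _ (fun _ _ => sq_nonneg _) (lp.hasSum_norm_sq _)

theorem norm_adjoint_le_of_forall_ge_eq_zero (hC : IsCesaroOperator k C) (hk : 1 ≤ k)
    (g : ℓ²(ℕ, ℂ)) (N : ℕ) (hg : ∀ i, N ≤ i → g i = 0) :
    ‖adjoint C g‖ ≤ ‖C g‖ := by
  have hbound : ∀ n ≥ N, ‖adjoint C g‖ ^ 2 ≤ ‖C g‖ ^ 2 + ‖∑ j ∈ range N, g j‖ ^ 2 / (k + n) :=
    fun n hn => by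
      have hsum : ∑ j ∈ range N, g j = ∑ j ∈ range n, g j :=
        sum_subset (range_subset_range.mpr hn) fun j _ hj => hg j (by simpa using hj)
      exact hsum ▸ hC.norm_sq_adjoint_le hk g n fun i hi => hg i (hn.trans hi)
  have hlim : Tendsto (fun n : ℕ => ‖C g‖ ^ 2 + ‖∑ j ∈ range N, g j‖ ^ 2 / (k + n)) atTop
      (𝓝 (‖C g‖ ^ 2)) := by
    simpa using tendsto_const_nhds.add
      (tendsto_const_nhds.div_atTop (tendsto_atTop_add_const_left _ k tendsto_natCast_atTop_atTop))
  exact (pow_le_pow_iff_left₀ (norm_nonneg _) (norm_nonneg _) two_ne_zero).mp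
    (ge_of_tendsto hlim (eventually_atTop.mpr ⟨N, hbound⟩))

end IsCesaroOperator

/-- For k ≥ 1, the generalized Cesàro operator C_k on ℓ², given by
(C_k f)(i) = (1/(k+i)) Σ_{j=0}^{i} f(j), is hyponormal:
C_k* C_k − C_k C_k* is a positive operator. -/
theorem cesaro_hyponormal (k : ℝ) (hk : 1 ≤ k)
    (C : lp (fun _ : ℕ => ℂ) 2 →L[ℂ] lp (fun _ : ℕ => ℂ) 2)
    (hC : ∀ f : lp (fun _ : ℕ => ℂ) 2, ∀ i : ℕ,
      C f i = (∑ j ∈ Finset.range (i + 1), f j) / ((k : ℂ) + (i : ℂ))) :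
    (adjoint C ∘L C - C ∘L adjoint C).IsPositive := by
  have hC' : IsCesaroOperator k C := hC
  refine isPositive_adjoint_comp_self_sub_self_comp_adjoint fun f => ?_
  refine (lp.dense_setOf_eventually_cofinite_eq_zero (p := 2) ENNReal.ofNat_ne_top).induction
    (fun g hg => ?_) (isClosed_le (by fun_prop) (by fun_prop)) f
  rw [Set.mem_ofPred_eq, Nat.cofinite_eq_atTop, eventually_atTop] at hg
  obtain ⟨N, hN⟩ := hg
  exact hC'.norm_adjoint_le_of_forall_ge_eq_zero hk g N hN
end

section
/- Every injective unilateral weighted shift W on ℓ² (with all weights nonzero) is supraposinormal: there exist positive operators Q, P, with Q injective with dense range, such that W Q W* = W* P W. Explicitly one may take Q = diag{|w₁|², |w₂|², |w₃|², ...} and P = diag{1, 0, |w₀|², |w₁|², ...}. -/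
/-!
The adjoint of a weighted shift acts by `(W* f) n = conj (w n) * f (n + 1)`, so for diagonal
operators `D a`, `D b` both `W (D a) W*` and `W* (D b) W` are diagonal, with entries
`0, |w₀|² a₀, |w₁|² a₁, …` and `|wₙ|² b_{n+1}` respectively. For `a = (|w_{n+1}|²)` and
`b = (1, 0, |w₀|², |w₁|², …)` both become `0, |w₀|²|w₁|², |w₁|²|w₂|², …`. Diagonal operators
with nonnegative entries are positive, `D a` is injective because no weight vanishes, and an
injective self-adjoint operator has dense range since the orthogonal complement of its range is
its kernel.
-/
open ContinuousLinearMap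
open scoped lp ENNReal InnerProductSpace ComplexConjugate ComplexOrder

namespace lp

variable {ι 𝕜 : Type*} [RCLike 𝕜]

noncomputable def diagonal (p : ℝ≥0∞) [Fact (1 ≤ p)] (d : ι → 𝕜)
    (hd : BddAbove (Set.range fun i ↦ ‖d i‖)) : ℓ^p(ι, 𝕜) →L[𝕜] ℓ^p(ι, 𝕜) :=
  mapCLM p (fun i ↦ d i • ContinuousLinearMap.id 𝕜 𝕜) (Real.iSup_nonneg fun i ↦ norm_nonneg (d i))
    fun i ↦ by simpa [norm_smul] using le_ciSup hd i

variable {p : ℝ≥0∞} [Fact (1 ≤ p)] {d : ι → 𝕜} {hd : BddAbove (Set.range fun i ↦ ‖d i‖)}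

@[simp]
theorem diagonal_apply (f : ℓ^p(ι, 𝕜)) (i : ι) : diagonal p d hd f i = d i * f i := rfl

theorem diagonal_injective (hd0 : ∀ i, d i ≠ 0) : Function.Injective (diagonal p d hd) :=
  fun f g hfg ↦ lp.ext <| funext fun i ↦
    mul_left_cancel₀ (hd0 i) (by simpa using congrFun (congrArg (⇑) hfg) i)

theorem isPositive_diagonal (hd0 : ∀ i, 0 ≤ d i) : (diagonal 2 d hd).IsPositive := by
  have hconj (i : ι) : conj (d i) = d i := (IsSelfAdjoint.of_nonneg (hd0 i)).star_eq
  refine (isPositive_iff _).mpr ⟨fun f g ↦ ?_, fun f ↦ ?_⟩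
  · simp only [coe_coe, lp.inner_eq_tsum, diagonal_apply, RCLike.inner_apply, map_mul, hconj]
    exact tsum_congr fun i ↦ by ring
  · rw [lp.inner_eq_tsum]
    refine tsum_nonneg fun i ↦ ?_
    rw [diagonal_apply, RCLike.inner_apply, map_mul, hconj, mul_left_comm]
    exact mul_nonneg (hd0 i) (mul_star_self_nonneg (f i))

end lp

theorem IsSelfAdjoint.denseRange_of_injective {𝕜 E : Type*} [RCLike 𝕜] [NormedAddCommGroup E]
    [InnerProductSpace 𝕜 E] [CompleteSpace E] {T : E →L[𝕜] E} (hT : IsSelfAdjoint T)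
    (hinj : Function.Injective T) : DenseRange T := by
  have h : T.rangeᗮ = ⊥ := by
    rw [T.orthogonal_range, hT.adjoint_eq, LinearMap.ker_eq_bot.mpr hinj]
  simpa [DenseRange, LinearMap.coe_range] using Submodule.dense_iff_topologicalClosure_eq_top.mpr
    (Submodule.topologicalClosure_eq_top_iff.mpr h)

structure IsWeightedShift {𝕜 : Type*} [RCLike 𝕜] (w : ℕ → 𝕜) (W : ℓ²(ℕ, 𝕜) →L[𝕜] ℓ²(ℕ, 𝕜)) :
    Prop where
  apply_zero : ∀ f, W f 0 = 0
  apply_succ : ∀ f n, W f (n + 1) = w n * f n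

namespace IsWeightedShift

variable {𝕜 : Type*} [RCLike 𝕜] {w : ℕ → 𝕜} {W : ℓ²(ℕ, 𝕜) →L[𝕜] ℓ²(ℕ, 𝕜)}

theorem apply_single (hW : IsWeightedShift w W) (n : ℕ) :
    W (lp.single 2 n 1) = w n • lp.single 2 (n + 1) 1 := by
  ext (_ | k)
  · simp [hW.apply_zero]
  · by_cases hk : k = n <;> simp [hW.apply_succ, lp.single_apply, hk]

theorem norm_weight_le (hW : IsWeightedShift w W) (n : ℕ) : ‖w n‖ ≤ ‖W‖ :=
  calc ‖w n‖ = ‖W (lp.single 2 n 1) (n + 1)‖ := by simp [hW.apply_succ]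
    _ ≤ ‖W (lp.single 2 n 1)‖ := lp.norm_apply_le_norm two_ne_zero _ _
    _ ≤ ‖W‖ := by simpa [lp.norm_single] using W.le_opNorm (lp.single 2 n (1 : 𝕜))

theorem adjoint_apply (hW : IsWeightedShift w W) (f : ℓ²(ℕ, 𝕜)) (n : ℕ) :
    adjoint W f n = conj (w n) * f (n + 1) := by
  have apply_eq_inner (g : ℓ²(ℕ, 𝕜)) (m : ℕ) : g m = ⟪lp.single 2 m 1, g⟫_𝕜 := by
    simp [lp.inner_single_left]
  rw [apply_eq_inner, adjoint_inner_right, hW.apply_single, inner_smul_left, ← apply_eq_inner]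

theorem comp_diagonal_comp_adjoint_apply_succ (hW : IsWeightedShift w W) (d : ℕ → 𝕜)
    (hd : BddAbove (Set.range fun n ↦ ‖d n‖)) (f : ℓ²(ℕ, 𝕜)) (n : ℕ) :
    (W ∘L lp.diagonal 2 d hd ∘L adjoint W) f (n + 1) = (‖w n‖ : 𝕜) ^ 2 * d n * f (n + 1) := by
  simp only [comp_apply, hW.apply_succ, lp.diagonal_apply, hW.adjoint_apply, ← RCLike.mul_conj]
  ring

theorem adjoint_comp_diagonal_comp_apply (hW : IsWeightedShift w W) (d : ℕ → 𝕜)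
    (hd : BddAbove (Set.range fun n ↦ ‖d n‖)) (f : ℓ²(ℕ, 𝕜)) (n : ℕ) :
    (adjoint W ∘L lp.diagonal 2 d hd ∘L W) f n = (‖w n‖ : 𝕜) ^ 2 * d (n + 1) * f n := by
  simp only [comp_apply, hW.apply_succ, lp.diagonal_apply, hW.adjoint_apply, ← RCLike.conj_mul]
  ring

end IsWeightedShift

/-- Every injective unilateral weighted shift is supraposinormal, with
Q = diag{|w₁|²,|w₂|²,...} (injective with dense range) and
P = diag{1, 0, |w₀|², |w₁|², ...}. -/
theorem injective_weighted_shift_supraposinormal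
    (w : ℕ → ℂ) (hw : ∀ n, w n ≠ 0)
    (W : lp (fun _ : ℕ => ℂ) 2 →L[ℂ] lp (fun _ : ℕ => ℂ) 2)
    (hW0 : ∀ f : lp (fun _ : ℕ => ℂ) 2, W f 0 = 0)
    (hWs : ∀ f : lp (fun _ : ℕ => ℂ) 2, ∀ n : ℕ, W f (n + 1) = w n * f n) :
    ∃ Q P : lp (fun _ : ℕ => ℂ) 2 →L[ℂ] lp (fun _ : ℕ => ℂ) 2,
      Q.IsPositive ∧ P.IsPositive ∧ Function.Injective Q ∧ DenseRange Q ∧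
      (∀ f : lp (fun _ : ℕ => ℂ) 2, ∀ n : ℕ,
        Q f n = ((‖w (n + 1)‖ : ℂ) ^ 2) * f n) ∧
      (∀ f : lp (fun _ : ℕ => ℂ) 2, P f 0 = f 0) ∧
      (∀ f : lp (fun _ : ℕ => ℂ) 2, P f 1 = 0) ∧
      (∀ f : lp (fun _ : ℕ => ℂ) 2, ∀ n : ℕ,
        P f (n + 2) = ((‖w n‖ : ℂ) ^ 2) * f (n + 2)) ∧
      W ∘L Q ∘L adjoint W = adjoint W ∘L P ∘L W := by
  have hW : IsWeightedShift w W := ⟨hW0, hWs⟩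
  let q (n : ℕ) : ℂ := (‖w (n + 1)‖ : ℂ) ^ 2
  let r : ℕ → ℂ
    | 0 => 1
    | 1 => 0
    | n + 2 => (‖w n‖ : ℂ) ^ 2
  have hbdd (n : ℕ) : ‖(‖w n‖ : ℂ) ^ 2‖ ≤ max 1 (‖W‖ ^ 2) := by
    simpa using Or.inr (pow_le_pow_left₀ (norm_nonneg _) (hW.norm_weight_le n) 2)
  have hq : BddAbove (Set.range fun n ↦ ‖q n‖) :=
    ⟨max 1 (‖W‖ ^ 2), by rintro _ ⟨n, rfl⟩; exact hbdd (n + 1)⟩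
  have hr : BddAbove (Set.range fun n ↦ ‖r n‖) :=
    ⟨max 1 (‖W‖ ^ 2), by rintro _ ⟨_ | _ | n, rfl⟩; exacts [by simp [r], by simp [r], hbdd n]⟩
  have hQinj : Function.Injective (lp.diagonal 2 q hq) :=
    lp.diagonal_injective fun n ↦ by simpa [q] using hw (n + 1)
  have hQ := lp.isPositive_diagonal (hd := hq) fun n ↦ by positivity
  refine ⟨lp.diagonal 2 q hq, lp.diagonal 2 r hr, hQ, lp.isPositive_diagonal ?_, hQinj,
    hQ.isSelfAdjoint.denseRange_of_injective hQinj, fun f n ↦ rfl, fun f ↦ one_mul _,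
    fun f ↦ zero_mul _, fun f n ↦ rfl, ?_⟩
  · rintro (_ | _ | n) <;> simp [r]
  · refine ContinuousLinearMap.ext fun f ↦ lp.ext <| funext fun n ↦ ?_
    cases n with
    | zero =>
      rw [hW.adjoint_comp_diagonal_comp_apply]
      simp [hW.apply_zero, r]
    | succ n =>
      rw [hW.comp_diagonal_comp_adjoint_apply_succ, hW.adjoint_comp_diagonal_comp_apply,
        RCLike.ofReal_eq_complex_ofReal]
      ring
end

section
/- An injective unilateral weighted shift W with weight sequence (wₙ) is posinormal if and only if sup_n |wₙ/w_{n+1}| < ∞. -/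
/-!
For `f ∈ ℓ²` one has `‖W f‖² = ∑ |wₙ|² |fₙ|²` and `‖W† f‖² = ∑ |wₙ|² |fₙ₊₁|²`. Posinormality
with constant `γ` says `‖W† f‖² ≤ γ² ‖W f‖²` for all `f`; testing on the basis vector `eₙ₊₁`
gives `|wₙ| ≤ γ |wₙ₊₁|`, and conversely this inequality bounds the series for `‖W† f‖²` termwise
by `γ²` times the tail `n ≥ 1` of the series for `‖W f‖²`.
-/

open ContinuousLinearMap
open scoped lp

namespace ContinuousLinearMap

variable {𝕜 E : Type*} [RCLike 𝕜] [NormedAddCommGroup E] [InnerProductSpace 𝕜 E] [CompleteSpace E]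

theorem reApplyInnerSelf_ofReal_smul_adjoint_comp_self_sub_self_comp_adjoint
    (T : E →L[𝕜] E) (c : ℝ) (x : E) :
    ((c : 𝕜) • (adjoint T ∘L T) - T ∘L adjoint T).reApplyInnerSelf x =
      c * ‖T x‖ ^ 2 - ‖adjoint T x‖ ^ 2 := by
  simp only [reApplyInnerSelf_apply, sub_apply, smul_apply, comp_apply, inner_sub_left,
    inner_smul_left, adjoint_inner_left, ← adjoint_inner_right T (adjoint T x) x,
    RCLike.conj_ofReal, inner_self_eq_norm_sq_to_K, map_sub, RCLike.re_ofReal_mul]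
  norm_cast

theorem isPositive_ofReal_smul_adjoint_comp_self_sub_self_comp_adjoint_iff
    (T : E →L[𝕜] E) (c : ℝ) :
    ((c : 𝕜) • (adjoint T ∘L T) - T ∘L adjoint T).IsPositive ↔
      ∀ x, ‖adjoint T x‖ ^ 2 ≤ c * ‖T x‖ ^ 2 := by
  have hsymm :
      (((c : 𝕜) • (adjoint T ∘L T) - T ∘L adjoint T : E →L[𝕜] E) : E →ₗ[𝕜] E).IsSymmetric :=
    ((isPositive_adjoint_comp_self T).isSymmetric.smul (RCLike.conj_ofReal c)).sub
      (isPositive_self_comp_adjoint T).isSymmetric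
  simp only [isPositive_def, and_iff_right hsymm,
    reApplyInnerSelf_ofReal_smul_adjoint_comp_self_sub_self_comp_adjoint, sub_nonneg]

end ContinuousLinearMap

theorem lp.hasSum_norm_sq_s14 {ι : Type*} {E : ι → Type*} [∀ i, NormedAddCommGroup (E i)]
    (f : lp E 2) : HasSum (fun i => ‖f i‖ ^ 2) (‖f‖ ^ 2) := by
  simpa using lp.hasSum_norm (p := 2) (by norm_num) f

section WeightedShift

variable {w : ℕ → ℂ} {W : ℓ²(ℕ, ℂ) →L[ℂ] ℓ²(ℕ, ℂ)}
  (hW0 : ∀ f : ℓ²(ℕ, ℂ), W f 0 = 0) (hWs : ∀ f : ℓ²(ℕ, ℂ), ∀ n, W f (n + 1) = w n * f n)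
include hW0 hWs

theorem shift_single_one (n : ℕ) : W (lp.single 2 n 1) = lp.single 2 (n + 1) (w n) := by
  ext (_ | k)
  · simp [hW0, lp.single_apply]
  · by_cases h : k = n <;> simp [hWs, lp.single_apply, h]

theorem adjoint_shift_apply (f : ℓ²(ℕ, ℂ)) (n : ℕ) :
    adjoint W f n = starRingEnd ℂ (w n) * f (n + 1) := by
  calc adjoint W f n = inner ℂ (lp.single 2 n (1 : ℂ)) (adjoint W f) := by
        simp [lp.inner_single_left]
    _ = starRingEnd ℂ (w n) * f (n + 1) := by
        rw [adjoint_inner_right, shift_single_one hW0 hWs, lp.inner_single_left]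
        simp [mul_comm]

theorem hasSum_norm_sq_shift (f : ℓ²(ℕ, ℂ)) :
    HasSum (fun n => ‖w n‖ ^ 2 * ‖f n‖ ^ 2) (‖W f‖ ^ 2) := by
  have h := (hasSum_nat_add_iff' 1).mpr (lp.hasSum_norm_sq_s14 (W f))
  simpa [hW0, hWs, mul_pow] using h

theorem hasSum_norm_sq_adjoint_shift (f : ℓ²(ℕ, ℂ)) :
    HasSum (fun n => ‖w n‖ ^ 2 * ‖f (n + 1)‖ ^ 2) (‖adjoint W f‖ ^ 2) := by
  simpa [adjoint_shift_apply hW0 hWs, mul_pow] using lp.hasSum_norm_sq_s14 (adjoint W f)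

theorem norm_sq_adjoint_shift_le_iff {c : ℝ} (hc : 0 ≤ c) :
    (∀ f : ℓ²(ℕ, ℂ), ‖adjoint W f‖ ^ 2 ≤ c * ‖W f‖ ^ 2) ↔
      ∀ n, ‖w n‖ ^ 2 ≤ c * ‖w (n + 1)‖ ^ 2 := by
  constructor
  · intro h n
    set e : ℓ²(ℕ, ℂ) := lp.single 2 (n + 1) 1
    have hWe : ‖W e‖ = ‖w (n + 1)‖ := by
      rw [shift_single_one hW0 hWs, lp.norm_single (by norm_num)]
    have hwn : ‖w n‖ ^ 2 ≤ ‖adjoint W e‖ ^ 2 := by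
      simpa [e] using le_hasSum (hasSum_norm_sq_adjoint_shift hW0 hWs e) n
        (fun _ _ => by positivity)
    simpa [hWe] using hwn.trans (h e)
  · intro h f
    have htail := ((hasSum_nat_add_iff' 1).mpr (hasSum_norm_sq_shift hW0 hWs f)).mul_left c
    have hle := hasSum_le (fun n => ?_) (hasSum_norm_sq_adjoint_shift hW0 hWs f) htail
    · simp only [Finset.range_one, Finset.sum_singleton] at hle
      nlinarith [mul_nonneg hc (mul_nonneg (sq_nonneg ‖w 0‖) (sq_nonneg ‖f 0‖))]
    · simpa [mul_assoc] using mul_le_mul_of_nonneg_right (h n) (sq_nonneg ‖f (n + 1)‖)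

end WeightedShift

/-- An injective unilateral weighted shift W is posinormal iff
sup_n |wₙ/w_{n+1}| < ∞. -/
theorem injective_shift_posinormal_iff
    (w : ℕ → ℂ) (hw : ∀ n, w n ≠ 0)
    (W : lp (fun _ : ℕ => ℂ) 2 →L[ℂ] lp (fun _ : ℕ => ℂ) 2)
    (hW0 : ∀ f : lp (fun _ : ℕ => ℂ) 2, W f 0 = 0)
    (hWs : ∀ f : lp (fun _ : ℕ => ℂ) 2, ∀ n : ℕ, W f (n + 1) = w n * f n) :
    (∃ γ : ℝ, 0 ≤ γ ∧
        (((γ : ℂ) ^ 2) • (adjoint W ∘L W) - W ∘L adjoint W).IsPositive) ↔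
      (∃ B : ℝ, ∀ n : ℕ, ‖w n / w (n + 1)‖ ≤ B) := by
  calc (∃ γ : ℝ, 0 ≤ γ ∧ (((γ : ℂ) ^ 2) • (adjoint W ∘L W) - W ∘L adjoint W).IsPositive)
      ↔ ∃ γ : ℝ, 0 ≤ γ ∧ ∀ n, ‖w n / w (n + 1)‖ ≤ γ := by
        refine exists_congr fun γ => and_congr_right fun hγ => ?_
        have h := isPositive_ofReal_smul_adjoint_comp_self_sub_self_comp_adjoint_iff W (γ ^ 2)
        rw [RCLike.ofReal_eq_complex_ofReal, Complex.ofReal_pow] at h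
        rw [h, norm_sq_adjoint_shift_le_iff hW0 hWs (sq_nonneg γ)]
        refine forall_congr' fun n => ?_
        rw [← mul_pow, pow_le_pow_iff_left₀ (norm_nonneg _) (by positivity) two_ne_zero, norm_div,
          div_le_iff₀ (norm_pos_iff.mpr (hw (n + 1)))]
    _ ↔ ∃ B : ℝ, ∀ n, ‖w n / w (n + 1)‖ ≤ B :=
        ⟨fun ⟨γ, _, hγ⟩ => ⟨γ, hγ⟩,
          fun ⟨B, hB⟩ => ⟨max B 0, le_max_right B 0, fun n => (hB n).trans (le_max_left B 0)⟩⟩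
end

section
/- Let M = M({aᵢ},{cⱼ}) be a bounded lower triangular factorable matrix on ℓ² with aᵢ, cⱼ > 0 for all i, j and with a_k/c_k strictly decreasing to 0. Define diagonal operators P with entries p_k = (c_{k+1}a_k − c_k a_{k+1})/(c_k c_{k+1} a_k²) and Q with entries q₀ = 1/(c₀a₀), q_{k+1} = (c_{k+1}a_k − c_k a_{k+1})/(c_{k+1}² a_k a_{k+1}), and assume P, Q ∈ B(ℓ²). Then M* P M = M Q M*, and this common operator has (i,j) entry c_{min(i,j)} a_{max(i,j)}; hence M is supraposinormal. -/
/-!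
Compare `M* P M` and `M Q M*` entrywise. Column `j` of `M` is `(a_k c_j)_{k ≥ j}`, so
`⟪P M e_j, M e_i⟫ = c_i c_j ∑_{k ≥ max i j} p_k a_k²` with `p_k a_k² = a_k/c_k - a_{k+1}/c_{k+1}`;
as `a_k/c_k ↓ 0` the series telescopes to `a_m/c_m`, `m = max i j`. Dually
`⟪Q M* e_j, M* e_i⟫ = a_i a_j ∑_{k ≤ min i j} q_k c_k²` with `q_k c_k² = c_k/a_k - c_{k-1}/a_{k-1}`
(and `c_{-1}/a_{-1} = 0`), a finite sum telescoping to `c_n/a_n`, `n = min i j`. Both give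
`c_{min i j} a_{max i j}`. Strict decrease of `a_k/c_k` is positivity of the common numerator
`c_{k+1}a_k - c_k a_{k+1}` of `p_k` and `q_{k+1}`, so the diagonals of `P` and `Q` are positive.
-/

open ContinuousLinearMap Filter
open scoped lp InnerProductSpace ComplexConjugate

theorem Antitone.hasSum_ite_sub_succ {F : ℕ → ℝ} (hF : Antitone F)
    (hlim : Tendsto F atTop (nhds 0)) (m : ℕ) :
    HasSum (fun k => if m ≤ k then F k - F (k + 1) else 0) (F m) := by
  rw [← hasSum_nat_add_iff' m]
  have hzero : ∑ k ∈ Finset.range m, (if m ≤ k then F k - F (k + 1) else 0) = 0 :=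
    Finset.sum_eq_zero fun k hk => if_neg (by simpa using hk)
  simp only [le_add_iff_nonneg_left, zero_le, if_true, hzero, sub_zero]
  have hnonneg : ∀ k, 0 ≤ F (k + m) - F (k + m + 1) := fun k => sub_nonneg.2 (hF (by omega))
  rw [hasSum_iff_tendsto_nat_of_nonneg hnonneg]
  have hpartial : ∀ n, ∑ k ∈ Finset.range n, (F (k + m) - F (k + m + 1)) = F m - F (n + m) := by
    intro n
    simpa [add_right_comm] using Finset.sum_range_sub' (fun k => F (k + m)) n
  simp only [hpartial]
  simpa using tendsto_const_nhds.sub (hlim.comp (tendsto_add_atTop_nat m))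

namespace lp

variable {ι 𝕜 : Type*} [RCLike 𝕜]

theorem ext_inner_single [DecidableEq ι] {T S : ℓ²(ι, 𝕜) →L[𝕜] ℓ²(ι, 𝕜)}
    (h : ∀ i j,
      ⟪T (lp.single 2 j 1), lp.single 2 i 1⟫_𝕜 = ⟪S (lp.single 2 j 1), lp.single 2 i 1⟫_𝕜) :
    T = S := by
  refine lp.ext_continuousLinearMap ENNReal.ofNat_ne_top fun j => ext_ring ?_
  refine lp.ext (funext fun i => ?_)
  exact (starRingEnd 𝕜).injective (by simpa [lp.inner_single_right] using h i j)

theorem adjoint_single_apply [DecidableEq ι] (T : ℓ²(ι, 𝕜) →L[𝕜] ℓ²(ι, 𝕜)) (j k : ι) :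
    adjoint T (lp.single 2 j 1) k = conj (T (lp.single 2 k 1) j) := by
  have h := adjoint_inner_right T (lp.single 2 k 1) (lp.single 2 j 1)
  simpa [lp.inner_single_left, lp.inner_single_right] using h

def IsDiagonal (T : ℓ²(ι, 𝕜) →L[𝕜] ℓ²(ι, 𝕜)) (d : ι → ℝ) : Prop :=
  ∀ f k, T f k = (d k : 𝕜) * f k

variable {T : ℓ²(ι, 𝕜) →L[𝕜] ℓ²(ι, 𝕜)} {d : ι → ℝ}

theorem IsDiagonal.hasSum_inner (hT : IsDiagonal T d) (x y : ℓ²(ι, 𝕜)) :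
    HasSum (fun k => (d k : 𝕜) * ⟪x k, y k⟫_𝕜) ⟪T x, y⟫_𝕜 := by
  convert lp.hasSum_inner (𝕜 := 𝕜) (T x) y using 2 with k
  show _ = ⟪T x k, y k⟫_𝕜
  rw [hT, RCLike.inner_apply, RCLike.inner_apply, map_mul, RCLike.conj_ofReal]
  ring

theorem IsDiagonal.isPositive (hT : IsDiagonal T d) (hd : ∀ k, 0 ≤ d k) : T.IsPositive := by
  refine ⟨fun x y => ?_, fun x => ?_⟩
  · have h := lp.hasSum_inner (𝕜 := 𝕜) x (T y)
    simp only [hT y, ← smul_eq_mul, inner_smul_right] at h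
    exact (hT.hasSum_inner x y).unique h
  · refine ((hT.hasSum_inner x x).mapL RCLike.reCLM).nonneg fun k => ?_
    simpa [inner_self_eq_norm_sq_to_K] using mul_nonneg (hd k) (sq_nonneg ‖x k‖)

theorem IsDiagonal.denseRange [DecidableEq ι] (hT : IsDiagonal T d) (hd : ∀ k, d k ≠ 0) :
    DenseRange T := by
  have hsingle : ∀ i (z : 𝕜),
      (lp.single 2 i z : ℓ²(ι, 𝕜)) ∈ LinearMap.range (T : ℓ²(ι, 𝕜) →ₗ[𝕜] ℓ²(ι, 𝕜)) := by
    refine fun i z => ⟨lp.single 2 i ((d i : 𝕜)⁻¹ * z), ?_⟩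
    ext k
    rcases eq_or_ne k i with rfl | hki
    · exact (hT _ k).trans (by simp [hd])
    · exact (hT _ k).trans (by simp [hki])
  refine fun f => mem_closure_of_tendsto (lp.hasSum_single ENNReal.ofNat_ne_top f)
    (Eventually.of_forall fun s => ?_)
  exact Submodule.sum_mem _ fun i _ => hsingle i (f i)

end lp

noncomputable def factorableP (a c : ℕ → ℝ) (k : ℕ) : ℝ :=
  (c (k + 1) * a k - c k * a (k + 1)) / (c k * c (k + 1) * a k ^ 2)

noncomputable def factorableQ (a c : ℕ → ℝ) : ℕ → ℝ
  | 0 => 1 / (c 0 * a 0)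
  | k + 1 => (c (k + 1) * a k - c k * a (k + 1)) / (c (k + 1) ^ 2 * a k * a (k + 1))

section Real

variable {a c : ℕ → ℝ}

theorem cross_sub_pos_of_strictAnti (hc : ∀ j, 0 < c j) (hdec : StrictAnti fun k => a k / c k)
    (k : ℕ) : 0 < c (k + 1) * a k - c k * a (k + 1) := by
  have h := (div_lt_div_iff₀ (hc (k + 1)) (hc k)).1 (hdec k.lt_succ_self)
  linarith

theorem factorableP_pos (ha : ∀ i, 0 < a i) (hc : ∀ j, 0 < c j)
    (hdec : StrictAnti fun k => a k / c k) (k : ℕ) : 0 < factorableP a c k :=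
  div_pos (cross_sub_pos_of_strictAnti hc hdec k)
    (mul_pos (mul_pos (hc k) (hc (k + 1))) (pow_pos (ha k) 2))

theorem factorableQ_pos (ha : ∀ i, 0 < a i) (hc : ∀ j, 0 < c j)
    (hdec : StrictAnti fun k => a k / c k) : ∀ k, 0 < factorableQ a c k
  | 0 => one_div_pos.2 (mul_pos (hc 0) (ha 0))
  | k + 1 => div_pos (cross_sub_pos_of_strictAnti hc hdec k)
      (mul_pos (mul_pos (pow_pos (hc (k + 1)) 2) (ha k)) (ha (k + 1)))

theorem factorableP_mul_sq (ha : ∀ i, 0 < a i) (hc : ∀ j, 0 < c j) (k : ℕ) :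
    factorableP a c k * a k ^ 2 = a k / c k - a (k + 1) / c (k + 1) := by
  have := (ha k).ne'
  have := (hc k).ne'
  have := (hc (k + 1)).ne'
  unfold factorableP
  field_simp

theorem sum_range_factorableQ_mul_sq (ha : ∀ i, 0 < a i) (hc : ∀ j, 0 < c j) (n : ℕ) :
    ∑ k ∈ Finset.range (n + 1), factorableQ a c k * c k ^ 2 = c n / a n := by
  induction n with
  | zero =>
    have := (ha 0).ne'
    have := (hc 0).ne'
    simp only [zero_add, Finset.sum_range_one, factorableQ]
    field_simp
  | succ n ih =>
    have := (ha n).ne'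
    have := (ha (n + 1)).ne'
    have := (hc (n + 1)).ne'
    rw [Finset.sum_range_succ, ih, factorableQ]
    field_simp
    ring

theorem hasSum_factorableP_mul_sq (ha : ∀ i, 0 < a i) (hc : ∀ j, 0 < c j)
    (hdec : StrictAnti fun k => a k / c k) (hlim : Tendsto (fun k => a k / c k) atTop (nhds 0))
    (m : ℕ) : HasSum (fun k => if m ≤ k then factorableP a c k * a k ^ 2 else 0) (a m / c m) := by
  simp only [factorableP_mul_sq ha hc]
  exact hdec.antitone.hasSum_ite_sub_succ hlim m

end Real

section Operator

variable {𝕜 : Type*} [RCLike 𝕜]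

def IsLowerFactorable (M : ℓ²(ℕ, 𝕜) →L[𝕜] ℓ²(ℕ, 𝕜)) (a c : ℕ → ℝ) : Prop :=
  ∀ f i, M f i = (a i : 𝕜) * ∑ j ∈ Finset.range (i + 1), (c j : 𝕜) * f j

variable {M : ℓ²(ℕ, 𝕜) →L[𝕜] ℓ²(ℕ, 𝕜)} {a c : ℕ → ℝ}

namespace IsLowerFactorable

theorem apply_single (hM : IsLowerFactorable M a c) (j k : ℕ) :
    M (lp.single 2 j 1) k = if j ≤ k then ((a k * c j : ℝ) : 𝕜) else 0 := by
  rw [hM]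
  simp [Pi.single_apply]

theorem adjoint_apply_single (hM : IsLowerFactorable M a c) (j k : ℕ) :
    adjoint M (lp.single 2 j 1) k = if k ≤ j then ((a j * c k : ℝ) : 𝕜) else 0 := by
  rw [lp.adjoint_single_apply, hM.apply_single]
  split_ifs <;> simp

theorem inner_adjoint_comp_comp_single (ha : ∀ i, 0 < a i) (hc : ∀ j, 0 < c j)
    (hdec : StrictAnti fun k => a k / c k) (hlim : Tendsto (fun k => a k / c k) atTop (nhds 0))
    (hM : IsLowerFactorable M a c) {P : ℓ²(ℕ, 𝕜) →L[𝕜] ℓ²(ℕ, 𝕜)}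
    (hP : lp.IsDiagonal P (factorableP a c)) (i j : ℕ) :
    ⟪(adjoint M ∘L P ∘L M) (lp.single 2 j 1), lp.single 2 i 1⟫_𝕜
      = ((c (min i j) * a (max i j) : ℝ) : 𝕜) := by
  have hterm : ∀ k, (factorableP a c k : 𝕜) * ⟪M (lp.single 2 j 1) k, M (lp.single 2 i 1) k⟫_𝕜
      = ((c i * c j * if max i j ≤ k then factorableP a c k * a k ^ 2 else 0 : ℝ) : 𝕜) := by
    intro k
    by_cases hi : i ≤ k <;> by_cases hj : j ≤ k <;>
      simp [hM.apply_single, hi, hj, RCLike.inner_apply, ← RCLike.algebraMap_eq_ofReal]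
    ring
  have hsum := (hasSum_factorableP_mul_sq ha hc hdec hlim (max i j)).mul_left (c i * c j)
  have hentry : c i * c j * (a (max i j) / c (max i j)) = c (min i j) * a (max i j) := by
    rcases le_total i j with h | h
    · simp only [min_eq_left h, max_eq_right h]; field_simp [(hc j).ne']
    · simp only [min_eq_right h, max_eq_left h]; field_simp [(hc i).ne']
  rw [comp_apply, comp_apply, adjoint_inner_left, ← hentry]
  refine (hP.hasSum_inner _ _).unique ?_
  simpa only [hterm] using (RCLike.hasSum_ofReal 𝕜).2 hsum

theorem inner_comp_comp_adjoint_single (ha : ∀ i, 0 < a i) (hc : ∀ j, 0 < c j)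
    (hM : IsLowerFactorable M a c) {Q : ℓ²(ℕ, 𝕜) →L[𝕜] ℓ²(ℕ, 𝕜)}
    (hQ : lp.IsDiagonal Q (factorableQ a c)) (i j : ℕ) :
    ⟪(M ∘L Q ∘L adjoint M) (lp.single 2 j 1), lp.single 2 i 1⟫_𝕜
      = ((c (min i j) * a (max i j) : ℝ) : 𝕜) := by
  have hterm : ∀ k, (factorableQ a c k : 𝕜) *
      ⟪adjoint M (lp.single 2 j 1) k, adjoint M (lp.single 2 i 1) k⟫_𝕜
      = ((if k ≤ min i j then factorableQ a c k * c k ^ 2 * (a i * a j) else 0 : ℝ) : 𝕜) := by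
    intro k
    by_cases hi : k ≤ i <;> by_cases hj : k ≤ j <;>
      simp [hM.adjoint_apply_single, hi, hj, RCLike.inner_apply, ← RCLike.algebraMap_eq_ofReal]
    ring
  have hsum : HasSum
      (fun k => if k ≤ min i j then factorableQ a c k * c k ^ 2 * (a i * a j) else 0)
      (c (min i j) / a (min i j) * (a i * a j)) := by
    have h := hasSum_sum_of_ne_finset_zero (L := .unconditional ℕ)
      (s := Finset.range (min i j + 1))
      (f := fun k => if k ≤ min i j then factorableQ a c k * c k ^ 2 * (a i * a j) else 0)
      fun k hk => if_neg (by simpa [Nat.lt_succ_iff] using hk)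
    rwa [Finset.sum_ite_of_true fun k hk => Nat.lt_succ_iff.1 (Finset.mem_range.1 hk),
      ← Finset.sum_mul, sum_range_factorableQ_mul_sq ha hc] at h
  have hentry : c (min i j) / a (min i j) * (a i * a j) = c (min i j) * a (max i j) := by
    rcases le_total i j with h | h
    · simp only [min_eq_left h, max_eq_right h]; field_simp [(ha i).ne']
    · simp only [min_eq_right h, max_eq_left h]; field_simp [(ha j).ne']
  rw [comp_apply, comp_apply, ← adjoint_inner_right, ← hentry]
  refine (hQ.hasSum_inner _ _).unique ?_
  simpa only [hterm] using (RCLike.hasSum_ofReal 𝕜).2 hsum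

end IsLowerFactorable
end Operator

/-- For a bounded factorable matrix M with aᵢ, cⱼ > 0 and a_k/c_k strictly
decreasing to 0, with the stated diagonal operators P and Q, one has
M* P M = M Q M*, the common operator has (i,j) entry c_{min(i,j)} a_{max(i,j)},
and M is supraposinormal (P and Q are positive with dense range). -/
theorem factorable_supraposinormal
    (a c : ℕ → ℝ) (ha : ∀ i, 0 < a i) (hc : ∀ j, 0 < c j)
    (hdec : StrictAnti fun k => a k / c k)
    (hlim : Tendsto (fun k => a k / c k) atTop (nhds 0))
    (M P Q : lp (fun _ : ℕ => ℂ) 2 →L[ℂ] lp (fun _ : ℕ => ℂ) 2)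
    (hM : ∀ f : lp (fun _ : ℕ => ℂ) 2, ∀ i : ℕ,
      M f i = (a i : ℂ) * ∑ j ∈ Finset.range (i + 1), (c j : ℂ) * f j)
    (hP : ∀ f : lp (fun _ : ℕ => ℂ) 2, ∀ k : ℕ,
      P f k = (((c (k + 1) * a k - c k * a (k + 1)) / (c k * c (k + 1) * (a k) ^ 2) : ℝ) : ℂ) * f k)
    (hQ0 : ∀ f : lp (fun _ : ℕ => ℂ) 2, Q f 0 = ((1 / (c 0 * a 0) : ℝ) : ℂ) * f 0)
    (hQs : ∀ f : lp (fun _ : ℕ => ℂ) 2, ∀ k : ℕ,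
      Q f (k + 1) = (((c (k + 1) * a k - c k * a (k + 1)) / ((c (k + 1)) ^ 2 * a k * a (k + 1)) : ℝ) : ℂ) * f (k + 1)) :
    adjoint M ∘L P ∘L M = M ∘L Q ∘L adjoint M ∧
    (∀ i j : ℕ,
      (inner ℂ ((adjoint M ∘L P ∘L M) (lp.single 2 j (1 : ℂ))) (lp.single 2 i (1 : ℂ)) : ℂ)
        = ((c (min i j) * a (max i j) : ℝ) : ℂ)) ∧
    P.IsPositive ∧ Q.IsPositive ∧ DenseRange P ∧ DenseRange Q := by
  have hM' : IsLowerFactorable M a c := hM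
  have hP' : lp.IsDiagonal P (factorableP a c) := hP
  have hQ' : lp.IsDiagonal Q (factorableQ a c) := by
    rintro f (_ | k)
    exacts [hQ0 f, hQs f k]
  have hPpos := factorableP_pos ha hc hdec
  have hQpos := factorableQ_pos ha hc hdec
  have hMPM := hM'.inner_adjoint_comp_comp_single ha hc hdec hlim hP'
  have hMQM := hM'.inner_comp_comp_adjoint_single ha hc hQ'
  exact ⟨lp.ext_inner_single fun i j => (hMPM i j).trans (hMQM i j).symm, hMPM,
    hP'.isPositive fun k => (hPpos k).le, hQ'.isPositive fun k => (hQpos k).le,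
    hP'.denseRange fun k => (hPpos k).ne', hQ'.denseRange fun k => (hQpos k).ne'⟩
end

section
/- The lower triangular Toeplitz-type factorable matrix M on ℓ² with entries m_{ij} = r^{i−j} for j ≤ i (and 0 otherwise), where 0 < r < 1, is a bounded hyponormal operator. -/
/-!
`M` is the inverse of `1 - r • S`, where `S` is the unilateral shift. Since `S` is an isometry,
`S S*` is a projection, so `S S* ≤ 1 = S* S`: the shift is hyponormal. Hyponormality survives
real scaling and `a ↦ 1 - a` (the self-commutator does not change), and it passes to inverses
because inversion is antitone on positive invertible elements of a C⋆-algebra: from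
`N N* ≤ N* N` one gets `(N* N)⁻¹ ≤ (N N*)⁻¹`, which is `M M* ≤ M* M` for `M = N⁻¹`.
-/

open scoped ENNReal
open ContinuousLinearMap

def IsHyponormal {R : Type*} [Mul R] [Star R] [LE R] (a : R) : Prop :=
  a * star a ≤ star a * a

namespace IsHyponormal

section StarOrderedRing

variable {R : Type*} [Ring R] [StarRing R] [PartialOrder R] [StarOrderedRing R]

lemma of_star_mul_self_eq_one {s : R} (hs : star s * s = 1) : IsHyponormal s := by
  have hproj : IsStarProjection (s * star s) :=
    ⟨by rw [IsIdempotentElem, mul_assoc, ← mul_assoc (star s), hs, one_mul],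
      IsSelfAdjoint.mul_star_self s⟩
  rw [IsHyponormal, hs]
  exact hproj.le_one

lemma one_sub {a : R} (ha : IsHyponormal a) : IsHyponormal (1 - a) := by
  have expand : ∀ x y : R, (1 - x) * (1 - y) = 1 - x - y + x * y := fun x y => by noncomm_ring
  rw [IsHyponormal, star_sub, star_one, expand, expand, add_comm, add_comm _ (star a * a),
    sub_right_comm]
  exact add_le_add_left ha _

end StarOrderedRing

variable {A : Type*} [CStarAlgebra A] [PartialOrder A] [StarOrderedRing A]

lemma smul {a : A} (ha : IsHyponormal a) (r : ℝ) : IsHyponormal (r • a) := by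
  rw [IsHyponormal, star_smul, star_trivial, smul_mul_smul_comm, smul_mul_smul_comm]
  exact smul_le_smul_of_nonneg_left ha (mul_self_nonneg r)

lemma units_inv {u : Aˣ} (hu : IsHyponormal (u : A)) : IsHyponormal (↑u⁻¹ : A) := by
  have h := CStarAlgebra.inv_le_inv (a := u * star u) (b := star u * u)
    (by simp) (by simp only [Units.val_mul, Units.coe_star]; exact hu)
  simp only [mul_inv_rev, Units.val_mul, Units.coe_star_inv] at h
  exact h

end IsHyponormal

namespace lp

section RightShift

variable {𝕜 E : Type*} [NormedField 𝕜] [NormedAddCommGroup E] [NormedSpace 𝕜 E]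

def rightShiftFun (f : ℕ → E) : ℕ → E
  | 0 => 0
  | n + 1 => f n

lemma summable_norm_sq_rightShiftFun (f : lp (fun _ : ℕ => E) 2) :
    Summable fun i => ‖rightShiftFun f i‖ ^ (2 : ℝ≥0∞).toReal := by
  refine (summable_nat_add_iff 1).1 ?_
  simpa [rightShiftFun] using (lp.memℓp f).summable (by norm_num)

lemma tsum_norm_sq_rightShiftFun (f : lp (fun _ : ℕ => E) 2) :
    ∑' i, ‖rightShiftFun f i‖ ^ (2 : ℝ≥0∞).toReal = ∑' i, ‖f i‖ ^ (2 : ℝ≥0∞).toReal := by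
  rw [(summable_norm_sq_rightShiftFun f).tsum_eq_zero_add]
  simp [rightShiftFun]

variable (𝕜) in
def rightShift : lp (fun _ : ℕ => E) 2 →ₗᵢ[𝕜] lp (fun _ : ℕ => E) 2 where
  toFun f := ⟨rightShiftFun f, memℓp_gen (summable_norm_sq_rightShiftFun f)⟩
  map_add' f g := by ext (_ | n); exacts [(add_zero 0).symm, rfl]
  map_smul' c f := by ext (_ | n); exacts [(smul_zero c).symm, rfl]
  norm_map' f := by
    rw [norm_eq_tsum_rpow (by norm_num), norm_eq_tsum_rpow (by norm_num)]
    exact congrArg (· ^ _) (tsum_norm_sq_rightShiftFun f)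

@[simp] lemma rightShift_apply_zero (f : lp (fun _ : ℕ => E) 2) : rightShift 𝕜 f 0 = 0 := rfl

@[simp] lemma rightShift_apply_succ (f : lp (fun _ : ℕ => E) 2) (n : ℕ) :
    rightShift 𝕜 f (n + 1) = f n := rfl

lemma apply_eq_sum_of_sub_smul_rightShift_eq {c : 𝕜} {f g : lp (fun _ : ℕ => 𝕜) 2}
    (h : g - c • rightShift 𝕜 g = f) (i : ℕ) :
    g i = ∑ j ∈ Finset.range (i + 1), c ^ (i - j) * f j := by
  have hf : ∀ n, f n = g n - c * rightShift 𝕜 g n := fun n => by rw [← h]; rfl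
  induction i with
  | zero => simp [hf]
  | succ n ih =>
    rw [Finset.sum_range_succ, Finset.sum_congr rfl fun j hj => by
      rw [Nat.sub_add_comm (Finset.mem_range_succ_iff.mp hj), pow_succ', mul_assoc],
      ← Finset.mul_sum, ← ih, hf, rightShift_apply_succ, Nat.sub_self, pow_zero, one_mul]
    ring

end RightShift

variable {𝕜 E : Type*} [RCLike 𝕜] [NormedAddCommGroup E] [InnerProductSpace 𝕜 E] [CompleteSpace E]

lemma star_rightShift_mul_self :
    star (rightShift 𝕜 : lp (fun _ : ℕ => E) 2 →ₗᵢ[𝕜] _).toContinuousLinearMap *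
      (rightShift 𝕜).toContinuousLinearMap = 1 :=
  (norm_map_iff_adjoint_comp_self _).mp (rightShift 𝕜).norm_map

end lp

/-- The lower triangular Toeplitz-type factorable matrix with entries r^{i−j}
(0 < r < 1) defines a bounded hyponormal operator on ℓ². -/
theorem toeplitz_factorable_hyponormal (r : ℝ) (hr0 : 0 < r) (hr1 : r < 1) :
    ∃ M : lp (fun _ : ℕ => ℂ) 2 →L[ℂ] lp (fun _ : ℕ => ℂ) 2,
      (∀ f : lp (fun _ : ℕ => ℂ) 2, ∀ i : ℕ,
        M f i = ∑ j ∈ Finset.range (i + 1), ((r : ℂ) ^ (i - j)) * f j) ∧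
      (adjoint M ∘L M - M ∘L adjoint M).IsPositive := by
  set S := (lp.rightShift ℂ : lp (fun _ : ℕ => ℂ) 2 →ₗᵢ[ℂ] _).toContinuousLinearMap
  have hS : star S * S = 1 := lp.star_rightShift_mul_self
  have hrS : ‖r • S‖ < 1 := calc
    ‖r • S‖ ≤ |r| * ‖S‖ := (norm_smul_le r S).trans_eq (by rw [Real.norm_eq_abs])
    _ ≤ |r| * 1 := by gcongr; exact LinearIsometry.norm_toContinuousLinearMap_le _
    _ < 1 := by rw [mul_one, abs_lt]; exact ⟨by linarith, hr1⟩
  set u := Units.oneSub (r • S) hrS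
  set M := ((u⁻¹ : (lp (fun _ : ℕ => ℂ) 2 →L[ℂ] lp (fun _ : ℕ => ℂ) 2)ˣ) :
    lp (fun _ : ℕ => ℂ) 2 →L[ℂ] lp (fun _ : ℕ => ℂ) 2)
  refine ⟨M, fun f => lp.apply_eq_sum_of_sub_smul_rightShift_eq ?_, ?_⟩
  · have h : (1 - r • S) (M f) = f := congrArg (· f) u.mul_inv
    rw [sub_apply, one_apply_eq_self, smul_apply] at h
    rwa [Complex.coe_smul]
  · have h : IsHyponormal M := ((IsHyponormal.of_star_mul_self_eq_one hS).smul r).one_sub.units_inv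
    rw [IsHyponormal, star_eq_adjoint, mul_def, mul_def] at h
    rwa [← nonneg_iff_isPositive, sub_nonneg]
end

section
/- Let M be the Fibonacci factorable matrix on ℓ² with entries m_{ij} = f_{j+1}²/(f_{i+1} f_{i+2}) for j ≤ i and 0 otherwise, where (f_n) is the Fibonacci sequence. With P = diag{(f_{n+2}² f_{n+3} − f_{n+1}³)/(f_{n+1} f_{n+2} f_{n+3})} and Q = diag{(f_{n+1}² f_{n+2} − f_n³)/f_{n+1}³}, one has M* P M = M Q M*, and moreover I ≤ Q ≤ 2I and (1/2)I ≤ P ≤ 4I; hence M is both posinormal and coposinormal. -/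
/-!
With `f` the Fibonacci sequence, the matrix is factorable: `m i j = u i * v j` for `j ≤ i`, where
`u i = 1 / (f (i+1) f (i+2))` and `v j = f (j+1) ^ 2`. Hence
`(M* P M) i j = v i v j ∑_{k ≥ max i j} u k ^ 2 p k` and
`(M Q M*) i j = u i u j ∑_{k ≤ min i j} v k ^ 2 q k`, and `P`, `Q` are chosen exactly so that these
sums telescope, to `u k / v k` at `k = max i j` and to `v k / u k` at `k = min i j`; both entries
are then `u (max i j) * v (min i j)`. The bounds on `P` and `Q` only use `f n ≤ f (n+1) ≤ 2 f n`.
Finally `M* P M = M Q M*` turns `I ≤ Q` and `P ≤ 4I` into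
`4 M* M - M M* = M* (4 - P) M + M (Q - 1) M* ≥ 0`, and symmetrically for `M*`.
-/

open ContinuousLinearMap Filter Topology Finset
open scoped ENNReal ComplexOrder

namespace ContinuousLinearMap

variable {𝕜 E : Type*} [RCLike 𝕜] [NormedAddCommGroup E] [InnerProductSpace 𝕜 E] [CompleteSpace E]

def IsPosinormal (T : E →L[𝕜] E) : Prop :=
  ∃ γ : ℝ, 0 ≤ γ ∧ (((γ : 𝕜) ^ 2) • (adjoint T ∘L T) - T ∘L adjoint T).IsPositive

theorem isPositive_smul_adjoint_comp_self_sub_smul_self_comp_adjoint {T P Q : E →L[𝕜] E}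
    {a b : 𝕜} (h : adjoint T ∘L P ∘L T = T ∘L Q ∘L adjoint T)
    (hQ : (Q - a • 1).IsPositive) (hP : (b • 1 - P).IsPositive) :
    (b • (adjoint T ∘L T) - a • (T ∘L adjoint T)).IsPositive := by
  have hsplit : b • (adjoint T ∘L T) - a • (T ∘L adjoint T) =
      adjoint T ∘L (b • 1 - P) ∘L T + T ∘L (Q - a • 1) ∘L adjoint T := by
    simp only [← mul_def] at h ⊢
    simp only [mul_sub, sub_mul, mul_smul_comm, smul_mul_assoc, one_mul, h]
    abel
  rw [hsplit]
  exact (hP.adjoint_conj T).add (hQ.conj_adjoint T)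

theorem IsPosinormal.of_adjoint_comp_comp_eq {T P Q : E →L[𝕜] E} {a b : ℝ} (ha : 0 < a)
    (hb : 0 ≤ b) (h : adjoint T ∘L P ∘L T = T ∘L Q ∘L adjoint T)
    (hQ : (Q - (a : 𝕜) • 1).IsPositive) (hP : ((b : 𝕜) • 1 - P).IsPositive) :
    T.IsPosinormal := by
  refine ⟨√(b / a), Real.sqrt_nonneg _, ?_⟩
  have hγ : ((√(b / a) : ℝ) : 𝕜) ^ 2 = (a : 𝕜)⁻¹ * b := by
    rw [← RCLike.ofReal_pow, Real.sq_sqrt (by positivity)]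
    push_cast
    ring
  have ha' : (0 : 𝕜) ≤ (a : 𝕜)⁻¹ := by
    rw [← RCLike.ofReal_inv, RCLike.ofReal_nonneg]
    positivity
  have hscaled :=
    (isPositive_smul_adjoint_comp_self_sub_smul_self_comp_adjoint h hQ hP).smul_of_nonneg ha'
  rwa [smul_sub, smul_smul, smul_smul, inv_mul_cancel₀ (by exact_mod_cast ha.ne'), one_smul,
    ← hγ] at hscaled

end ContinuousLinearMap

theorem HasSum.ite_le_of_nat_add {α : Type*} [AddCommMonoid α] [TopologicalSpace α]
    {f : ℕ → α} {s : α} {n : ℕ} (h : HasSum (fun k => f (k + n)) s) :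
    HasSum (fun k => if n ≤ k then f k else 0) s := by
  refine (Function.Injective.hasSum_iff (add_left_injective n) fun k hk => ?_).mp ?_
  · rw [if_neg]
    rintro hnk
    exact hk ⟨k - n, Nat.sub_add_cancel hnk⟩
  · simpa [Function.comp_def] using h

theorem hasSum_of_eq_sub_succ {f g : ℕ → ℝ} {l : ℝ} (hf : ∀ k, 0 ≤ f k)
    (hfg : ∀ k, f k = g k - g (k + 1)) (hg : Tendsto g atTop (𝓝 l)) : HasSum f (g 0 - l) := by
  rw [hasSum_iff_tendsto_nat_of_nonneg hf]
  simp only [hfg, Finset.sum_range_sub']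
  exact tendsto_const_nhds.sub hg

namespace lp

variable {ι 𝕜 : Type*} [RCLike 𝕜]

theorem isPositive_of_apply_eq_mul {T : lp (fun _ : ι => 𝕜) 2 →L[𝕜] lp (fun _ : ι => 𝕜) 2}
    {c : ι → ℝ} (hT : ∀ f i, T f i = (c i : 𝕜) * f i) (hc : ∀ i, 0 ≤ c i) : T.IsPositive := by
  refine ⟨fun f g => ?_, fun f => ?_⟩
  · change inner 𝕜 (T f) g = inner 𝕜 f (T g)
    simp only [lp.inner_eq_tsum, hT, RCLike.inner_apply, map_mul, RCLike.conj_ofReal]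
    exact tsum_congr fun i => by ring
  · have hterm : ∀ i, inner 𝕜 (T f i) (f i) = ((c i * ‖f i‖ ^ 2 : ℝ) : 𝕜) := fun i => by
      rw [hT, RCLike.inner_apply, map_mul, RCLike.conj_ofReal, mul_left_comm, RCLike.mul_conj]
      push_cast
      rfl
    have hsum := lp.hasSum_inner (𝕜 := 𝕜) (T f) f
    simp only [hterm] at hsum
    have hre := hsum.mapL RCLike.reCLM
    simp only [RCLike.reCLM_apply, RCLike.ofReal_re] at hre
    exact hre.nonneg fun i => mul_nonneg (hc i) (sq_nonneg _)

theorem isPositive_sub_smul_one_of_apply_eq_mul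
    {T : lp (fun _ : ι => 𝕜) 2 →L[𝕜] lp (fun _ : ι => 𝕜) 2} {c : ι → ℝ} {a : ℝ}
    (hT : ∀ f i, T f i = (c i : 𝕜) * f i) (ha : ∀ i, a ≤ c i) : (T - (a : 𝕜) • 1).IsPositive :=
  isPositive_of_apply_eq_mul (c := fun i => c i - a) (fun f i => by
    rw [sub_apply, lp.coeFn_sub, Pi.sub_apply, smul_apply, lp.coeFn_smul, Pi.smul_apply,
      one_apply_eq_self, hT, RCLike.ofReal_sub, sub_mul, smul_eq_mul])
    fun i => sub_nonneg.mpr (ha i)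

theorem isPositive_smul_one_sub_of_apply_eq_mul
    {T : lp (fun _ : ι => 𝕜) 2 →L[𝕜] lp (fun _ : ι => 𝕜) 2} {c : ι → ℝ} {b : ℝ}
    (hT : ∀ f i, T f i = (c i : 𝕜) * f i) (hb : ∀ i, c i ≤ b) : ((b : 𝕜) • 1 - T).IsPositive :=
  isPositive_of_apply_eq_mul (c := fun i => b - c i) (fun f i => by
    rw [sub_apply, lp.coeFn_sub, Pi.sub_apply, smul_apply, lp.coeFn_smul, Pi.smul_apply,
      one_apply_eq_self, hT, RCLike.ofReal_sub, sub_mul, smul_eq_mul])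
    fun i => sub_nonneg.mpr (hb i)

variable [DecidableEq ι]

theorem ext_continuousLinearMap_single {p : ℝ≥0∞} [Fact (1 ≤ p)] (hp : p ≠ ⊤) {F : Type*}
    [NormedAddCommGroup F] [NormedSpace 𝕜 F]
    {T S : lp (fun _ : ι => 𝕜) p →L[𝕜] F} (h : ∀ i, T (lp.single p i 1) = S (lp.single p i 1)) :
    T = S := by
  refine ContinuousLinearMap.ext fun f => ?_
  have hsingle : ∀ i, lp.single (E := fun _ : ι => 𝕜) p i (f i) = f i • lp.single p i 1 :=
    fun i => by rw [← lp.single_smul, smul_eq_mul, mul_one]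
  have hf := lp.hasSum_single hp f
  simp only [hsingle] at hf
  refine (hf.mapL T).unique ?_
  simpa only [map_smul, h] using hf.mapL S

theorem apply_eq_inner_single (f : lp (fun _ : ι => 𝕜) 2) (i : ι) :
    f i = inner 𝕜 (lp.single 2 i (1 : 𝕜)) f := by
  simp [lp.inner_single_left]

section Factorable

variable {M : lp (fun _ : ℕ => 𝕜) 2 →L[𝕜] lp (fun _ : ℕ => 𝕜) 2} {u v : ℕ → ℝ}

theorem apply_single_of_factorable
    (hM : ∀ f i, M f i = (u i : 𝕜) * ∑ j ∈ range (i + 1), (v j : 𝕜) * f j) (i j : ℕ) :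
    M (lp.single 2 j 1) i = if j ≤ i then ((u i * v j : ℝ) : 𝕜) else 0 := by
  simp only [hM, lp.single_apply, Pi.single_apply, mul_ite, mul_one, mul_zero,
    Finset.sum_ite_eq', Finset.mem_range, Nat.lt_succ_iff]
  split_ifs <;> push_cast <;> ring

theorem adjoint_apply_single_of_factorable
    (hM : ∀ f i, M f i = (u i : 𝕜) * ∑ j ∈ range (i + 1), (v j : 𝕜) * f j) (i j : ℕ) :
    adjoint M (lp.single 2 j 1) i = if i ≤ j then ((u j * v i : ℝ) : 𝕜) else 0 := by
  rw [apply_eq_inner_single, adjoint_inner_right, lp.inner_single_right,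
    apply_single_of_factorable hM]
  split_ifs <;> simp

theorem adjoint_comp_comp_self_apply_single_of_factorable
    {P : lp (fun _ : ℕ => 𝕜) 2 →L[𝕜] lp (fun _ : ℕ => 𝕜) 2} {p : ℕ → ℝ}
    (hM : ∀ f i, M f i = (u i : 𝕜) * ∑ j ∈ range (i + 1), (v j : 𝕜) * f j)
    (hP : ∀ f n, P f n = (p n : 𝕜) * f n) (hv : ∀ n, v n ≠ 0)
    (htail : ∀ j, HasSum (fun k => u (k + j) ^ 2 * p (k + j)) (u j / v j)) (i j : ℕ) :
    (adjoint M ∘L P ∘L M) (lp.single 2 j 1) i = ((u (max i j) * v (min i j) : ℝ) : 𝕜) := by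
  rw [comp_apply, comp_apply, apply_eq_inner_single, adjoint_inner_right]
  have hterm : ∀ k, inner 𝕜 (M (lp.single 2 i 1) k) (P (M (lp.single 2 j 1)) k) =
      (((if max i j ≤ k then u k ^ 2 * p k else 0) * (v i * v j) : ℝ) : 𝕜) := fun k => by
    rw [hP, apply_single_of_factorable hM, apply_single_of_factorable hM]
    by_cases hi : i ≤ k <;> by_cases hj : j ≤ k <;> simp [hi, hj, RCLike.inner_apply]
    ring
  have hsum := lp.hasSum_inner (𝕜 := 𝕜) (M (lp.single 2 i 1)) (P (M (lp.single 2 j 1)))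
  simp only [hterm] at hsum
  have htarget : HasSum (fun k => (if max i j ≤ k then u k ^ 2 * p k else 0) * (v i * v j))
      (u (max i j) * v (min i j)) := by
    have hval : u (max i j) / v (max i j) * (v i * v j) = u (max i j) * v (min i j) := by
      rcases le_total i j with h | h
      · rw [max_eq_right h, min_eq_left h]
        field_simp [hv j]
      · rw [max_eq_left h, min_eq_right h]
        field_simp [hv i]
    rw [← hval]
    exact ((htail (max i j)).ite_le_of_nat_add (f := fun k => u k ^ 2 * p k)).mul_right _
  exact hsum.unique ((RCLike.hasSum_ofReal 𝕜).mpr htarget)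

theorem comp_comp_adjoint_apply_single_of_factorable
    {Q : lp (fun _ : ℕ => 𝕜) 2 →L[𝕜] lp (fun _ : ℕ => 𝕜) 2} {q : ℕ → ℝ}
    (hM : ∀ f i, M f i = (u i : 𝕜) * ∑ j ∈ range (i + 1), (v j : 𝕜) * f j)
    (hQ : ∀ f n, Q f n = (q n : 𝕜) * f n) (hu : ∀ n, u n ≠ 0)
    (hhead : ∀ i, ∑ k ∈ range (i + 1), v k ^ 2 * q k = v i / u i) (i j : ℕ) :
    (M ∘L Q ∘L adjoint M) (lp.single 2 j 1) i = ((u (max i j) * v (min i j) : ℝ) : 𝕜) := by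
  have htrunc : ∑ k ∈ range (i + 1), (if k ≤ j then v k ^ 2 * q k else 0) =
      ∑ k ∈ range (min i j + 1), v k ^ 2 * q k := by
    rw [← Finset.sum_filter]
    congr 1
    ext k
    simp only [Finset.mem_filter, Finset.mem_range]
    omega
  rw [comp_apply, comp_apply, hM]
  simp only [hQ, adjoint_apply_single_of_factorable hM]
  have hsum : ∑ k ∈ range (i + 1),
      (v k : 𝕜) * ((q k : 𝕜) * if k ≤ j then ((u j * v k : ℝ) : 𝕜) else 0) =
      ((u j * ∑ k ∈ range (min i j + 1), v k ^ 2 * q k : ℝ) : 𝕜) := by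
    rw [← htrunc, Finset.mul_sum, RCLike.ofReal_sum]
    refine Finset.sum_congr rfl fun k _ => ?_
    split_ifs <;> push_cast <;> ring
  rw [hsum, hhead, ← RCLike.ofReal_mul]
  congr 1
  rcases le_total i j with h | h
  · rw [max_eq_right h, min_eq_left h]
    field_simp [hu i]
  · rw [max_eq_left h, min_eq_right h]
    field_simp [hu j]

theorem adjoint_comp_comp_self_eq_of_factorable
    {P Q : lp (fun _ : ℕ => 𝕜) 2 →L[𝕜] lp (fun _ : ℕ => 𝕜) 2} {p q : ℕ → ℝ}
    (hM : ∀ f i, M f i = (u i : 𝕜) * ∑ j ∈ range (i + 1), (v j : 𝕜) * f j)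
    (hP : ∀ f n, P f n = (p n : 𝕜) * f n) (hQ : ∀ f n, Q f n = (q n : 𝕜) * f n)
    (hu : ∀ n, u n ≠ 0) (hv : ∀ n, v n ≠ 0)
    (htail : ∀ j, HasSum (fun k => u (k + j) ^ 2 * p (k + j)) (u j / v j))
    (hhead : ∀ i, ∑ k ∈ range (i + 1), v k ^ 2 * q k = v i / u i) :
    adjoint M ∘L P ∘L M = M ∘L Q ∘L adjoint M :=
  ext_continuousLinearMap_single ENNReal.ofNat_ne_top fun j => lp.ext <| funext fun i => by
    rw [adjoint_comp_comp_self_apply_single_of_factorable hM hP hv htail,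
      comp_comp_adjoint_apply_single_of_factorable hM hQ hu hhead]

end Factorable

end lp

section Fibonacci

open Nat

noncomputable def fibRowFactor (i : ℕ) : ℝ := 1 / ((fib (i + 1) : ℝ) * fib (i + 2))

noncomputable def fibColFactor (j : ℕ) : ℝ := (fib (j + 1) : ℝ) ^ 2

noncomputable def fibP (n : ℕ) : ℝ :=
  ((fib (n + 2) : ℝ) ^ 2 * fib (n + 3) - (fib (n + 1) : ℝ) ^ 3) /
    ((fib (n + 1) : ℝ) * fib (n + 2) * fib (n + 3))

noncomputable def fibQ (n : ℕ) : ℝ :=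
  ((fib (n + 1) : ℝ) ^ 2 * fib (n + 2) - (fib n : ℝ) ^ 3) / (fib (n + 1) : ℝ) ^ 3

theorem cast_fib_succ_pos (n : ℕ) : (0 : ℝ) < fib (n + 1) := by
  exact_mod_cast fib_pos.mpr n.succ_pos

theorem fibRowFactor_ne_zero (n : ℕ) : fibRowFactor n ≠ 0 := by
  have := cast_fib_succ_pos n
  have := cast_fib_succ_pos (n + 1)
  unfold fibRowFactor
  positivity

theorem fibColFactor_ne_zero (n : ℕ) : fibColFactor n ≠ 0 := by
  have := cast_fib_succ_pos n
  unfold fibColFactor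
  positivity

theorem one_le_fibQ (n : ℕ) : 1 ≤ fibQ n := by
  have h₁ := cast_fib_succ_pos n
  have hle : (fib n : ℝ) ≤ fib (n + 1) := by exact_mod_cast fib_le_fib_succ
  have hrec : (fib (n + 2) : ℝ) = fib n + fib (n + 1) := by exact_mod_cast fib_add_two
  have h₀ : (0 : ℝ) ≤ fib n := by positivity
  rw [fibQ, le_div_iff₀ (by positivity), hrec]
  nlinarith [mul_nonneg h₀ (mul_nonneg (sub_nonneg.mpr hle) (add_nonneg h₀ h₁.le))]

theorem fibQ_le_two (n : ℕ) : fibQ n ≤ 2 := by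
  have h₁ := cast_fib_succ_pos n
  have hle : (fib n : ℝ) ≤ fib (n + 1) := by exact_mod_cast fib_le_fib_succ
  have hrec : (fib (n + 2) : ℝ) = fib n + fib (n + 1) := by exact_mod_cast fib_add_two
  have h₀ : (0 : ℝ) ≤ fib n := by positivity
  rw [fibQ, div_le_iff₀ (by positivity), hrec]
  nlinarith [pow_nonneg h₀ 3, mul_le_mul_of_nonneg_left hle (sq_nonneg (fib (n + 1) : ℝ))]

theorem one_half_le_fibP (n : ℕ) : 1 / 2 ≤ fibP n := by
  have h₁ := cast_fib_succ_pos n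
  have h₂ := cast_fib_succ_pos (n + 1)
  have h₃ := cast_fib_succ_pos (n + 2)
  have hle : (fib (n + 1) : ℝ) ≤ fib (n + 2) := by exact_mod_cast fib_le_fib_succ
  have hrec : (fib (n + 3) : ℝ) = fib (n + 1) + fib (n + 2) := by exact_mod_cast fib_add_two
  rw [fibP, div_le_div_iff₀ (by norm_num) (by positivity), hrec]
  nlinarith [mul_nonneg (sub_nonneg.mpr hle) (by positivity : (0 : ℝ) ≤
    2 * (fib (n + 2) : ℝ) ^ 2 + 3 * fib (n + 1) * fib (n + 2) + 2 * (fib (n + 1) : ℝ) ^ 2)]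

theorem fibP_le_four (n : ℕ) : fibP n ≤ 4 := by
  have h₁ := cast_fib_succ_pos n
  have h₂ := cast_fib_succ_pos (n + 1)
  have h₃ := cast_fib_succ_pos (n + 2)
  have hle : (fib n : ℝ) ≤ fib (n + 1) := by exact_mod_cast fib_le_fib_succ
  have hrec : (fib (n + 2) : ℝ) = fib n + fib (n + 1) := by exact_mod_cast fib_add_two
  rw [fibP, div_le_iff₀ (by positivity)]
  nlinarith [pow_pos h₁ 3, mul_le_mul_of_nonneg_right (mul_le_mul_of_nonneg_right
    (show (fib (n + 2) : ℝ) ≤ 2 * fib (n + 1) by linarith) h₂.le) h₃.le]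

theorem tendsto_fibRowFactor_div_fibColFactor_atTop :
    Tendsto (fun k => fibRowFactor k / fibColFactor k) atTop (𝓝 0) := by
  have hfib : Tendsto (fun k => (fib (k + 2) : ℝ)) atTop atTop :=
    tendsto_natCast_atTop_atTop.comp fib_add_two_strictMono.tendsto_atTop
  refine squeeze_zero (fun k => ?_) (fun k => ?_) (tendsto_inv_atTop_zero.comp hfib)
  · have := cast_fib_succ_pos k
    simp only [fibRowFactor, fibColFactor]
    positivity
  · have h₁ : (1 : ℝ) ≤ fib (k + 1) := by exact_mod_cast fib_pos.mpr k.succ_pos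
    have h₂ := cast_fib_succ_pos (k + 1)
    simp only [fibRowFactor, fibColFactor, Function.comp_apply]
    rw [div_div, ← one_div]
    gcongr
    nlinarith [pow_le_pow_left₀ zero_le_one h₁ 3]

theorem hasSum_fibRowFactor_sq_mul_fibP (j : ℕ) :
    HasSum (fun k => fibRowFactor (k + j) ^ 2 * fibP (k + j))
      (fibRowFactor j / fibColFactor j) := by
  have htele : ∀ k, fibRowFactor k ^ 2 * fibP k =
      fibRowFactor k / fibColFactor k - fibRowFactor (k + 1) / fibColFactor (k + 1) := by
    intro k
    simp only [fibRowFactor, fibColFactor, fibP]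
    field_simp
  have hg := tendsto_fibRowFactor_div_fibColFactor_atTop.comp (tendsto_add_atTop_nat j)
  have hsum := hasSum_of_eq_sub_succ (f := fun k => fibRowFactor (k + j) ^ 2 * fibP (k + j))
    (fun k => ?_) (fun k => by simp only [htele, Function.comp_apply, add_right_comm]) hg
  · simpa using hsum
  · have := one_half_le_fibP (k + j)
    positivity

theorem sum_fibColFactor_sq_mul_fibQ (i : ℕ) :
    ∑ k ∈ range (i + 1), fibColFactor k ^ 2 * fibQ k = fibColFactor i / fibRowFactor i := by
  have htele : ∀ k, fibColFactor k ^ 2 * fibQ k =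
      (fib (k + 1) : ℝ) ^ 3 * fib (k + 2) - (fib k : ℝ) ^ 3 * fib (k + 1) := by
    intro k
    simp only [fibColFactor, fibQ]
    field_simp
  simp only [htele]
  rw [Finset.sum_range_sub (fun k => (fib k : ℝ) ^ 3 * fib (k + 1))]
  simp only [fibColFactor, fibRowFactor, fib_zero, Nat.cast_zero]
  field_simp
  ring

end Fibonacci

/-- The Fibonacci factorable matrix satisfies M* P M = M Q M* with the stated
diagonal operators; moreover I ≤ Q ≤ 2I and (1/2)I ≤ P ≤ 4I; hence M is both
posinormal and coposinormal. -/
theorem fibonacci_factorable_posinormal_coposinormal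
    (M P Q : lp (fun _ : ℕ => ℂ) 2 →L[ℂ] lp (fun _ : ℕ => ℂ) 2)
    (hM : ∀ f : lp (fun _ : ℕ => ℂ) 2, ∀ i : ℕ,
      M f i = (1 / ((Nat.fib (i + 1) : ℂ) * (Nat.fib (i + 2) : ℂ))) *
        ∑ j ∈ Finset.range (i + 1), ((Nat.fib (j + 1) : ℂ) ^ 2) * f j)
    (hP : ∀ f : lp (fun _ : ℕ => ℂ) 2, ∀ n : ℕ,
      P f n = ((((Nat.fib (n + 2) : ℝ) ^ 2 * Nat.fib (n + 3) - (Nat.fib (n + 1) : ℝ) ^ 3) /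
        ((Nat.fib (n + 1) : ℝ) * Nat.fib (n + 2) * Nat.fib (n + 3)) : ℝ) : ℂ) * f n)
    (hQ : ∀ f : lp (fun _ : ℕ => ℂ) 2, ∀ n : ℕ,
      Q f n = ((((Nat.fib (n + 1) : ℝ) ^ 2 * Nat.fib (n + 2) - (Nat.fib n : ℝ) ^ 3) /
        ((Nat.fib (n + 1) : ℝ) ^ 3) : ℝ) : ℂ) * f n) :
    adjoint M ∘L P ∘L M = M ∘L Q ∘L adjoint M ∧
    (Q - 1).IsPositive ∧ ((2 : ℂ) • (1 : lp (fun _ : ℕ => ℂ) 2 →L[ℂ] lp (fun _ : ℕ => ℂ) 2) - Q).IsPositive ∧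
    (P - ((1 / 2 : ℂ) • 1)).IsPositive ∧ ((4 : ℂ) • (1 : lp (fun _ : ℕ => ℂ) 2 →L[ℂ] lp (fun _ : ℕ => ℂ) 2) - P).IsPositive ∧
    (∃ γ : ℝ, 0 ≤ γ ∧ (((γ : ℂ) ^ 2) • (adjoint M ∘L M) - M ∘L adjoint M).IsPositive) ∧
    (∃ γ : ℝ, 0 ≤ γ ∧ (((γ : ℂ) ^ 2) • (M ∘L adjoint M) - adjoint M ∘L M).IsPositive) := by
  have hMfactor : ∀ f i,
      M f i = (fibRowFactor i : ℂ) * ∑ j ∈ range (i + 1), (fibColFactor j : ℂ) * f j := by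
    intro f i
    simp [hM, fibRowFactor, fibColFactor]
  have hPQ : adjoint M ∘L P ∘L M = M ∘L Q ∘L adjoint M :=
    lp.adjoint_comp_comp_self_eq_of_factorable (p := fibP) (q := fibQ) hMfactor hP hQ
      fibRowFactor_ne_zero fibColFactor_ne_zero hasSum_fibRowFactor_sq_mul_fibP
      sum_fibColFactor_sq_mul_fibQ
  have hQ₁ := lp.isPositive_sub_smul_one_of_apply_eq_mul (c := fibQ) hQ one_le_fibQ
  have hQ₂ := lp.isPositive_smul_one_sub_of_apply_eq_mul (c := fibQ) hQ fibQ_le_two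
  have hP₁ := lp.isPositive_sub_smul_one_of_apply_eq_mul (c := fibP) hP one_half_le_fibP
  have hP₂ := lp.isPositive_smul_one_sub_of_apply_eq_mul (c := fibP) hP fibP_le_four
  have hcopos := IsPosinormal.of_adjoint_comp_comp_eq (T := adjoint M) (by norm_num) zero_le_two
    (by rwa [adjoint_adjoint, eq_comm]) hP₁ hQ₂
  rw [IsPosinormal, adjoint_adjoint] at hcopos
  refine ⟨hPQ, by simpa using hQ₁, by simpa using hQ₂, by simpa using hP₁, by simpa using hP₂,
    IsPosinormal.of_adjoint_comp_comp_eq one_pos zero_le_four hPQ hQ₁ hP₂, hcopos⟩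
end
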